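/- arXiv:1807.01683 — 4 statements merged into one kernel-verified Lean document; each statement's English description precedes it below -/
import Mathlib

section
/- Let q be a prime power, m a positive integer, d a nonnegative integer, and r a positive integer with r ≤ C(m+d, d) − r_d. Then ē_r(d, m) is attained by a family with distinct leading monomials: there exist linearly independent, projectively reduced homogeneous polynomials F_1, ..., F_r of degree d in F_q[x_0, ..., x_m] whose leading monomials lm(F_1), ..., lm(F_r) (with respect to the lexicographic order with x_0 ≻ ··· ≻ x_m) are distinct and for which |V(F_1, ..., F_r)(F_q)| = ē_r(d, m). Consequently, there exists e_0 such that ē_r(d, m) ≤ A_r(d, m; e) for all e ≥ e_0. -/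
open scoped Classical

/-- An exponent vector `b` (representing the monomial `x_0^{b 0} ⋯ x_m^{b m}`) is
*projectively reduced* if `b j ≤ q - 1` for every index `j` that is smaller than some
index with a positive exponent. -/
def ProjReduced (q m : ℕ) (b : Fin (m+1) → ℕ) : Prop :=
  ∀ j : Fin (m+1), (∃ l : Fin (m+1), j < l ∧ 0 < b l) → b j ≤ q - 1

/-- `M̄_e`: projectively reduced monomials of degree `e` in `x_0, …, x_m`. -/
def MbarDeg (q m e : ℕ) : Set (Fin (m+1) → ℕ) :=
  {b | ProjReduced q m b ∧ ∑ i, b i = e}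

/-- The shadow `∇_e(S)`. -/
def shadow (q m e : ℕ) (S : Set (Fin (m+1) → ℕ)) : Set (Fin (m+1) → ℕ) :=
  {b ∈ MbarDeg q m e | ∃ a ∈ S, ∀ i, a i ≤ b i}

/-- The footprint `Δ_e(S)`. -/
def footprint (q m e : ℕ) (S : Set (Fin (m+1) → ℕ)) : Set (Fin (m+1) → ℕ) :=
  MbarDeg q m e \ shadow q m e S

/-- `M̄_e^{(ℓ)}`: members of `M̄_e` involving only `x_0, …, x_ℓ` and divisible by `x_ℓ`
(with `M̄_e^{(0)} = {x_0^e}`). -/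
def MbarDegL (q m e : ℕ) (ℓ : Fin (m+1)) : Set (Fin (m+1) → ℕ) :=
  {b ∈ MbarDeg q m e | (∀ i : Fin (m+1), ℓ < i → b i = 0) ∧ ((ℓ : ℕ) = 0 ∨ 0 < b ℓ)}

/-- `Δ_e^{(ℓ)}(S) := Δ_e(S) ∩ M̄_e^{(ℓ)}`. -/
def footprintL (q m e : ℕ) (ℓ : Fin (m+1)) (S : Set (Fin (m+1) → ℕ)) :
    Set (Fin (m+1) → ℕ) :=
  footprint q m e S ∩ MbarDegL q m e ℓ

/-- `S^{⟨ℓ⟩}`: monomials in `S` involving only `x_0, …, x_ℓ` with all exponents of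
`x_0, …, x_{ℓ-1}` smaller than `q`. -/
def sliceL (q m : ℕ) (ℓ : Fin (m+1)) (S : Set (Fin (m+1) → ℕ)) : Set (Fin (m+1) → ℕ) :=
  {b ∈ S | (∀ i : Fin (m+1), ℓ < i → b i = 0) ∧ ∀ j : Fin (m+1), j < ℓ → b j < q}

/-- The specialization map `σ^{(ℓ)}`, keeping the exponents of `x_0, …, x_{ℓ-1}`. -/
def sigmaL (m ℓ : ℕ) (h : ℓ ≤ m) (b : Fin (m+1) → ℕ) : Fin ℓ → ℕ :=
  fun i => b (Fin.castLE (h.trans (Nat.le_succ m)) i)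

/-- The hypercube `H^{(ℓ)}`. -/
def Hcube (q ℓ : ℕ) : Set (Fin ℓ → ℕ) := {a | ∀ j, a j ≤ q - 1}

/-- `H^{(ℓ)}_d`: elements of the hypercube of degree exactly `d`. -/
def HcubeDeg (q ℓ d : ℕ) : Set (Fin ℓ → ℕ) := {a ∈ Hcube q ℓ | ∑ j, a j = d}

/-- `H^{(ℓ)}_{≤ d}`: elements of the hypercube of degree at most `d`. -/
def HcubeLe (q ℓ d : ℕ) : Set (Fin ℓ → ℕ) := {a ∈ Hcube q ℓ | ∑ j, a j ≤ d}

/-- The shadow `SH^{(ℓ)}(T)` inside the hypercube. -/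
def SHc (q ℓ : ℕ) (T : Set (Fin ℓ → ℕ)) : Set (Fin ℓ → ℕ) :=
  {a ∈ Hcube q ℓ | ∃ t ∈ T, ∀ j, t j ≤ a j}

/-- The footprint `FP^{(ℓ)}(T)` inside the hypercube. -/
def FPc (q ℓ : ℕ) (T : Set (Fin ℓ → ℕ)) : Set (Fin ℓ → ℕ) :=
  Hcube q ℓ \ SHc q ℓ T

/-- `M_d^{(ℓ)}(ρ)`: the first `ρ` elements of `H^{(ℓ)}_{≤ d}` in descending
lexicographic order, i.e. the elements whose descending-lex rank is at most `ρ`. -/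
def MtopC (q ℓ d ρ : ℕ) : Set (Fin ℓ → ℕ) :=
  {a ∈ HcubeLe q ℓ d | ({b ∈ HcubeLe q ℓ d | toLex a ≤ toLex b}).ncard ≤ ρ}

/-- `L_d^{(ℓ)}(ρ')`: the first `ρ'` elements of `H^{(ℓ)}_d` in descending
lexicographic order. -/
def LtopC (q ℓ d ρ' : ℕ) : Set (Fin ℓ → ℕ) :=
  {a ∈ HcubeDeg q ℓ d | ({b ∈ HcubeDeg q ℓ d | toLex a ≤ toLex b}).ncard ≤ ρ'}

/-- The expander map `φ` associated to a set `S` of (projectively reduced) monomials. -/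
noncomputable def phiExp (q m : ℕ) (S : Set (Fin (m+1) → ℕ)) (b : Fin (m+1) → ℕ) :
    Fin (m+1) → ℕ :=
  let pre : Fin (m+1) := ⟨m-1, by omega⟩
  let lst : Fin (m+1) := Fin.last m
  if Function.update (Function.update b lst 0) pre (b pre + b lst) ∉ S ∧ b pre + 1 < q
  then Function.update (Function.update b lst (b lst - 1)) pre (b pre + 1)
  else b

/-- `a` is a leading monomial (w.r.t. lex with `x_0 ≻ ⋯ ≻ x_m`) of the polynomial `F`. -/
def IsLeadMon {m : ℕ} {Fq : Type} [Field Fq] (F : MvPolynomial (Fin (m+1)) Fq)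
    (a : Fin (m+1) → ℕ) : Prop :=
  ∃ s ∈ F.support, ⇑s = a ∧ ∀ t ∈ F.support, toLex (⇑t : Fin (m+1) → ℕ) ≤ toLex ⇑s

/-- The number of `F_q`-points of the projective variety `V(F_1, …, F_r) ⊆ ℙ^m`. -/
noncomputable def projPoints {m r : ℕ} {Fq : Type} [Field Fq]
    (F : Fin r → MvPolynomial (Fin (m+1)) Fq) : ℕ :=
  {p : Projectivization Fq (Fin (m+1) → Fq) | ∀ i, MvPolynomial.eval p.rep (F i) = 0}.ncard

/-- `e_r(d, m)`: maximal number of projective points on `r` linearly independent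
degree-`d` hypersurfaces. -/
noncomputable def er (Fq : Type) [Field Fq] [Fintype Fq] (d m r : ℕ) : ℕ :=
  sSup {n | ∃ F : Fin r → MvPolynomial (Fin (m+1)) Fq,
    LinearIndependent Fq F ∧ (∀ i, (F i).IsHomogeneous d) ∧ n = projPoints F}

/-- `ē_r(d, m)`: as `e_r(d, m)` but with projectively reduced polynomials. -/
noncomputable def ebar (q : ℕ) (Fq : Type) [Field Fq] [Fintype Fq] (d m r : ℕ) : ℕ :=
  sSup {n | ∃ F : Fin r → MvPolynomial (Fin (m+1)) Fq,
    LinearIndependent Fq F ∧ (∀ i, (F i).IsHomogeneous d) ∧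
    (∀ i, ∀ s ∈ (F i).support, ProjReduced q m ⇑s) ∧ n = projPoints F}

/-- `A_r(d, m; e)`: the maximal footprint size over `r`-element subsets of `M̄_d`. -/
noncomputable def Ar (q m d r e : ℕ) : ℕ :=
  sSup {n | ∃ S : Set (Fin (m+1) → ℕ),
    S ⊆ MbarDeg q m d ∧ S.ncard = r ∧ n = (footprint q m e S).ncard}

/-- The first `r` elements of `M̄_d` in descending lexicographic order. -/
def MdTop (q m d r : ℕ) : Set (Fin (m+1) → ℕ) :=
  {a ∈ MbarDeg q m d | ({b ∈ MbarDeg q m d | toLex a ≤ toLex b}).ncard ≤ r}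

/-- `p_j = q^j + ⋯ + q + 1` for `j ≥ 0`, and `p_j = 0` for `j < 0`. -/
def pz (q : ℕ) (j : ℤ) : ℕ :=
  if 0 ≤ j then ∑ i ∈ Finset.range (j.toNat + 1), q ^ i else 0

/-- `⌊q^j⌋ := q^j` if `j ≥ 0` and `0` if `j < 0`. -/
def qfl (q : ℕ) (j : ℤ) : ℕ := if 0 ≤ j then q ^ j.toNat else 0

/-- `IsHr q d m r H` says that `H = H_r(d, m)`, the Heijnen–Pellikaan quantity:
for `r ≥ 1`, `H = Σ α_i q^{m-i}` where `α` is the `r`-th element of `Q^m_{≤ d}` in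
descending lexicographic order; by convention `H_0(d, m) = q^m`. -/
def IsHr (q d m r H : ℕ) : Prop :=
  (r = 0 ∧ H = q ^ m) ∨
  (0 < r ∧ ∃ α ∈ HcubeLe q m d,
    ({β ∈ HcubeLe q m d | toLex α ≤ toLex β}).ncard = r ∧
    H = ∑ k : Fin m, α k * q ^ (m - 1 - (k : ℕ)))

/-- The projective Reed–Muller code `PRM_q(d, m)`, as a subspace of the functions from
`ℙ^m(F_q)` to `F_q`: the image of the degree-`d` homogeneous polynomials under
evaluation at (fixed representatives of) the projective points. -/
noncomputable def PRM (Fq : Type) [Field Fq] [Fintype Fq] (d m : ℕ) :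
    Submodule Fq (Projectivization Fq (Fin (m+1) → Fq) → Fq) :=
  Submodule.map
    (LinearMap.pi (fun p : Projectivization Fq (Fin (m+1) → Fq) =>
      (MvPolynomial.aeval p.rep : MvPolynomial (Fin (m+1)) Fq →ₐ[Fq] Fq).toLinearMap))
    (MvPolynomial.homogeneousSubmodule (Fin (m+1)) Fq d)

/-- The `r`-th generalized Hamming weight of a linear code `C`. -/
noncomputable def genHW (Fq : Type) [Field Fq] {ι : Type} (C : Submodule Fq (ι → Fq))
    (r : ℕ) : ℕ :=
  sInf {w | ∃ D : Submodule Fq (ι → Fq), D ≤ C ∧ Module.finrank Fq ↥D = r ∧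
    w = {i : ι | ∃ c ∈ D, c i ≠ 0}.ncard}

section Aux
open MvPolynomial

variable {m : ℕ} {Fq : Type} [Field Fq]

lemma lex_total (a b : Fin (m+1) → ℕ) : toLex a ≤ toLex b ∨ toLex b ≤ toLex a := by
  have h : IsTrichotomous (Lex (∀ _ : Fin (m+1), ℕ)) (· < ·) :=
    ⟨(Pi.isTrichotomous_lex _ _ IsWellFounded.wf).1⟩
  rcases (by by_contra hc; simp only [not_or] at hc; exact hc.2.1 (h.trichotomous _ _ hc.1 hc.2.2) :
      toLex a < toLex b ∨ toLex a = toLex b ∨ toLex b < toLex a) with h1 | h1 | h1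
  · exact Or.inl (le_of_lt h1)
  · exact Or.inl (le_of_eq h1)
  · exact Or.inr (le_of_lt h1)

lemma finset_exists_max {β : Type*} (s : Finset β) (f : β → Fin (m+1) → ℕ)
    (hs : s.Nonempty) : ∃ a ∈ s, ∀ b ∈ s, toLex (f b) ≤ toLex (f a) := by
  classical
  induction s using Finset.induction with
  | empty => exact absurd hs (by simp)
  | @insert a s ha ih =>
    rcases s.eq_empty_or_nonempty with rfl | hne
    · exact ⟨a, by simp, by simp⟩
    · obtain ⟨b, hb, hmax⟩ := ih hne
      rcases lex_total (f a) (f b) with h | h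
      · exact ⟨b, Finset.mem_insert_of_mem hb, fun c hc => by
          rcases Finset.mem_insert.mp hc with rfl | hc
          · exact h
          · exact hmax c hc⟩
      · exact ⟨a, Finset.mem_insert_self _ _, fun c hc => by
          rcases Finset.mem_insert.mp hc with rfl | hc
          · exact le_refl _
          · exact le_trans (hmax c hc) h⟩

/-- toLex of the coercion of a finsupp. -/
def lexv {m : ℕ} (t : Fin (m+1) →₀ ℕ) : Lex (Fin (m+1) → ℕ) := toLex ⇑t

lemma lexv_inj : Function.Injective (lexv (m := m)) := fun s t h =>
  DFunLike.coe_injective (toLex.injective h)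

private lemma lex_lt_of {a b : Fin (m+1) → ℕ} (i : Fin (m+1))
    (h1 : ∀ j < i, a j = b j) (h2 : a i < b i) : toLex a < toLex b :=
  ⟨i, h1, h2⟩

private lemma lex_add_lt {a b : Fin (m+1) → ℕ} (c : Fin (m+1) → ℕ)
    (h : toLex a < toLex b) : toLex (c + a) < toLex (c + b) := by
  obtain ⟨i, hl, hi⟩ := h
  exact ⟨i, fun j hj => by
    have : a j = b j := hl j hj
    simp [this], by simpa using hi⟩

private lemma lex_add_le {a b : Fin (m+1) → ℕ} (c : Fin (m+1) → ℕ)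
    (h : toLex a ≤ toLex b) : toLex (c + a) ≤ toLex (c + b) := by
  rcases eq_or_lt_of_le h with he | hlt
  · exact le_of_eq (congrArg toLex (by rw [show a = b from toLex.injective he]))
  · exact le_of_lt (lex_add_lt c hlt)

/-- `s` is the (lex-)leading monomial of `F`. -/
def Lead (F : MvPolynomial (Fin (m+1)) Fq) (s : Fin (m+1) →₀ ℕ) : Prop :=
  s ∈ F.support ∧ ∀ t ∈ F.support, lexv t ≤ lexv s

lemma exists_lead {F : MvPolynomial (Fin (m+1)) Fq} (h : F ≠ 0) : ∃ s, Lead F s := by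
  obtain ⟨s, hs, hmax⟩ := finset_exists_max F.support (fun s => ⇑s) (by simpa using h)
  exact ⟨s, hs, hmax⟩

lemma li_of_lead {ι : Type} {F : ι → MvPolynomial (Fin (m+1)) Fq}
    {L : ι → (Fin (m+1) →₀ ℕ)} (hinj : Function.Injective L)
    (hL : ∀ i, Lead (F i) (L i)) : LinearIndependent Fq F := by
  rw [linearIndependent_iff']
  intro s g hsum i hi
  by_contra hgi
  have hne : (s.filter (fun j => g j ≠ 0)).Nonempty := ⟨i, Finset.mem_filter.mpr ⟨hi, hgi⟩⟩
  obtain ⟨i₀, hi₀, hmax⟩ := finset_exists_max _ (fun j => ⇑(L j)) hne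
  have hi₀s : i₀ ∈ s := (Finset.mem_filter.mp hi₀).1
  have hgi₀ : g i₀ ≠ 0 := (Finset.mem_filter.mp hi₀).2
  have hcoeff : coeff (L i₀) (∑ j ∈ s, g j • F j) = g i₀ * coeff (L i₀) (F i₀) := by
    rw [coeff_sum]
    refine Finset.sum_eq_single i₀ (fun j hj hji₀ => ?_) (fun h => absurd hi₀s h)
    rcases eq_or_ne (g j) 0 with h0 | h0
    · simp [h0]
    · have hj' : j ∈ s.filter (fun j => g j ≠ 0) := Finset.mem_filter.mpr ⟨hj, h0⟩
      have hz : coeff (L i₀) (F j) = 0 := by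
        by_contra hc
        have hmem : L i₀ ∈ (F j).support := mem_support_iff.mpr hc
        have h1 := (hL j).2 _ hmem
        have h2 := hmax j hj'
        exact hji₀ (hinj (lexv_inj (le_antisymm h2 h1)))
      simp [coeff_smul, hz]
  rw [hsum] at hcoeff
  simp only [coeff_zero] at hcoeff
  have hc0 : coeff (L i₀) (F i₀) ≠ 0 := mem_support_iff.mp (hL i₀).1
  rcases mul_eq_zero.mp hcoeff.symm with h | h
  · exact hgi₀ h
  · exact hc0 h

/-- All monomials of total degree `e`, as a finset of finsupps. -/
noncomputable def allMon (m e : ℕ) : Finset (Fin (m+1) →₀ ℕ) :=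
  (Finset.Nat.antidiagonalTuple (m+1) e).map
    ⟨Finsupp.equivFunOnFinite.symm, Finsupp.equivFunOnFinite.symm.injective⟩

lemma mem_allMon {e : ℕ} {s : Fin (m+1) →₀ ℕ} : s ∈ allMon m e ↔ ∑ i, s i = e := by
  simp only [allMon, Finset.mem_map, Function.Embedding.coeFn_mk,
    Finset.Nat.mem_antidiagonalTuple]
  constructor
  · rintro ⟨x, hx, rfl⟩; simpa using hx
  · intro h; exact ⟨⇑s, h, Finsupp.equivFunOnFinite_symm_coe s⟩

lemma sum_eq_of_mem_support {e : ℕ} {F : MvPolynomial (Fin (m+1)) Fq}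
    (hF : F.IsHomogeneous e) {s : Fin (m+1) →₀ ℕ} (hs : s ∈ F.support) :
    ∑ i, s i = e := by
  have hdeg : s.degree = e := by
    by_contra h
    exact mem_support_iff.mp hs (hF.coeff_eq_zero h)
  rw [← hdeg]
  exact (Finset.sum_subset (Finset.subset_univ _)
    (fun x _ hx => Finsupp.notMem_support_iff.mp hx)).symm

lemma support_subset_allMon {e : ℕ} {F : MvPolynomial (Fin (m+1)) Fq}
    (hF : F.IsHomogeneous e) : F.support ⊆ allMon m e :=
  fun s hs => mem_allMon.mpr (sum_eq_of_mem_support hF hs)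

/-- Measure used for well-founded reduction. -/
noncomputable def mea (m : ℕ) {Fq : Type} [Field Fq] (e : ℕ)
    (G : MvPolynomial (Fin (m+1)) Fq) : ℕ :=
  ((allMon m e).filter (fun t => ∃ s ∈ G.support, lexv t ≤ lexv s)).card

lemma mea_lt {e : ℕ} {G G' : MvPolynomial (Fin (m+1)) Fq} {s₀ : Fin (m+1) →₀ ℕ}
    (hG : G.IsHomogeneous e) (hlead : Lead G s₀)
    (h : ∀ t ∈ G'.support, lexv t < lexv s₀) :
    mea m e G' < mea m e G := by
  have hs₀G : s₀ ∈ allMon m e := support_subset_allMon hG hlead.1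
  apply Finset.card_lt_card
  constructor
  · intro t ht
    obtain ⟨htA, s, hsG', hle⟩ := Finset.mem_filter.mp ht
    exact Finset.mem_filter.mpr ⟨htA, s₀, hlead.1, le_of_lt (lt_of_le_of_lt hle (h s hsG'))⟩
  · intro hsub
    have hs₀mem : s₀ ∈ (allMon m e).filter (fun t => ∃ s ∈ G.support, lexv t ≤ lexv s) :=
      Finset.mem_filter.mpr ⟨hs₀G, s₀, hlead.1, le_refl _⟩
    obtain ⟨_, s, hsG', hle⟩ := Finset.mem_filter.mp (hsub hs₀mem)
    exact absurd (lt_of_le_of_lt hle (h s hsG')) (lt_irrefl _)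

end Aux


section Aux2
open MvPolynomial
variable {m : ℕ} {Fq : Type} [Field Fq]

lemma supp_lt_of_killed {G' : MvPolynomial (Fin (m+1)) Fq} {s₀ : Fin (m+1) →₀ ℕ}
    (hle : ∀ t ∈ G'.support, lexv t ≤ lexv s₀)
    (h0 : coeff s₀ G' = 0) : ∀ t ∈ G'.support, lexv t < lexv s₀ := by
  intro t ht
  refine lt_of_le_of_ne (hle t ht) (fun he => ?_)
  exact mem_support_iff.mp ht (by rw [lexv_inj he]; exact h0)

lemma homog_of_mem_span {d r : ℕ} {F : Fin r → MvPolynomial (Fin (m+1)) Fq}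
    (hhom : ∀ i, (F i).IsHomogeneous d) {G : MvPolynomial (Fin (m+1)) Fq}
    (hG : G ∈ Submodule.span Fq (Set.range F)) : G.IsHomogeneous d := by
  have hle : Submodule.span Fq (Set.range F) ≤ homogeneousSubmodule (Fin (m+1)) Fq d :=
    Submodule.span_le.mpr (by rintro _ ⟨i, rfl⟩; exact hhom i)
  exact (mem_homogeneousSubmodule _ _).mp (hle hG)

lemma reduced_of_mem_span {q r : ℕ} {F : Fin r → MvPolynomial (Fin (m+1)) Fq}
    (hred : ∀ i, ∀ s ∈ (F i).support, ProjReduced q m ⇑s)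
    {G : MvPolynomial (Fin (m+1)) Fq}
    (hG : G ∈ Submodule.span Fq (Set.range F)) :
    ∀ s ∈ G.support, ProjReduced q m ⇑s := by
  induction hG using Submodule.span_induction with
  | mem x h => obtain ⟨i, rfl⟩ := h; exact hred i
  | zero => simp
  | add x y hx hy ihx ihy =>
    intro s hs
    rcases Finset.mem_union.mp (MvPolynomial.support_add hs) with h | h
    · exact ihx s h
    · exact ihy s h
  | smul a x hx ihx =>
    intro s hs
    exact ihx s (Finsupp.support_smul hs)

lemma eval_zero_of_mem_span {r : ℕ} {F : Fin r → MvPolynomial (Fin (m+1)) Fq}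
    {y : Fin (m+1) → Fq} (h0 : ∀ i, eval y (F i) = 0)
    {G : MvPolynomial (Fin (m+1)) Fq}
    (hG : G ∈ Submodule.span Fq (Set.range F)) : eval y G = 0 := by
  induction hG using Submodule.span_induction with
  | mem x h => obtain ⟨i, rfl⟩ := h; exact h0 i
  | zero => simp
  | add x y hx hy ihx ihy => simp [ihx, ihy]
  | smul a x hx ihx => simp [smul_eval, ihx]

lemma elimination {d r : ℕ} {F : Fin r → MvPolynomial (Fin (m+1)) Fq}
    (hli : LinearIndependent Fq F) (hhom : ∀ i, (F i).IsHomogeneous d) :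
    ∃ (F' : Fin r → MvPolynomial (Fin (m+1)) Fq) (L : Fin r → (Fin (m+1) →₀ ℕ)),
      (∀ i, F' i ∈ Submodule.span Fq (Set.range F)) ∧ Function.Injective L ∧
      ∀ i, Lead (F' i) (L i) := by
  set W := Submodule.span Fq (Set.range F) with hW
  set T : Set (Fin (m+1) →₀ ℕ) := {s | ∃ G, G ∈ W ∧ Lead G s} with hT
  have hTfin : T.Finite := by
    refine Set.Finite.subset (allMon m d).finite_toSet ?_
    rintro s ⟨G, hGW, hlead⟩
    exact support_subset_allMon (homog_of_mem_span hhom hGW) hlead.1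
  have hsel : ∀ s, s ∈ T → ∃ G, G ∈ W ∧ Lead G s := fun s hs => hs
  choose! g hgW hglead using hsel
  have hspan : ∀ N (G : MvPolynomial (Fin (m+1)) Fq), G ∈ W → mea m d G ≤ N →
      G ∈ Submodule.span Fq (g '' T) := by
    intro N
    induction N using Nat.strong_induction_on with
    | _ N ih =>
      intro G hGW hmea
      rcases eq_or_ne G 0 with rfl | hG0
      · exact Submodule.zero_mem _
      obtain ⟨s₀, hlead⟩ := exists_lead hG0
      have hs₀T : s₀ ∈ T := ⟨G, hGW, hlead⟩
      have hc₀ : coeff s₀ (g s₀) ≠ 0 := mem_support_iff.mp (hglead s₀ hs₀T).1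
      set c : Fq := coeff s₀ G / coeff s₀ (g s₀) with hc
      set G' := G - c • g s₀ with hG'
      have hG'W : G' ∈ W := Submodule.sub_mem _ hGW (Submodule.smul_mem _ _ (hgW s₀ hs₀T))
      have hsupp : ∀ t ∈ G'.support, lexv t < lexv s₀ := by
        refine supp_lt_of_killed (fun t ht => ?_) ?_
        · rcases Finset.mem_union.mp (MvPolynomial.support_sub _ _ _ ht) with h | h
          · exact hlead.2 t h
          · exact (hglead s₀ hs₀T).2 t (Finsupp.support_smul h)
        · rw [hG']
          simp only [coeff_sub, coeff_smul, smul_eq_mul]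
          rw [hc, div_mul_cancel₀ _ hc₀, sub_self]
      have hmlt : mea m d G' < mea m d G :=
        mea_lt (homog_of_mem_span hhom hGW) hlead hsupp
      have hG'span := ih (mea m d G') (lt_of_lt_of_le hmlt hmea) G' hG'W le_rfl
      have : G = G' + c • g s₀ := by rw [hG']; ring
      rw [this]
      exact Submodule.add_mem _ hG'span
        (Submodule.smul_mem _ _ (Submodule.subset_span ⟨s₀, hs₀T, rfl⟩))
  have hWle : W ≤ Submodule.span Fq (g '' T) :=
    fun G hG => hspan (mea m d G) G hG le_rfl
  haveI := FiniteDimensional.span_of_finite Fq (hTfin.image g)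
  have hrank : r ≤ T.ncard := by
    have h1 : Module.finrank Fq W = r := by
      rw [hW, finrank_span_eq_card hli, Fintype.card_fin]
    have h2 : Module.finrank Fq W ≤ Module.finrank Fq (Submodule.span Fq (g '' T)) :=
      Submodule.finrank_mono hWle
    have h3 : Module.finrank Fq (Submodule.span Fq (g '' T)) ≤ (g '' T).ncard := by
      have := finrank_span_finset_le_card (R := Fq) ((hTfin.image g).toFinset)
      rw [Set.Finite.coe_toFinset] at this
      rw [Set.ncard_eq_toFinset_card _ (hTfin.image g)]
      exact this
    have h4 : (g '' T).ncard ≤ T.ncard := Set.ncard_image_le hTfin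
    omega
  obtain ⟨T', hT'sub, hT'card⟩ := Set.exists_subset_card_eq hrank
  have hT'fin : T'.Finite := hTfin.subset hT'sub
  have hcard : hT'fin.toFinset.card = r := by
    rw [← Set.ncard_eq_toFinset_card _ hT'fin]; exact hT'card
  set eqv := Finset.equivFinOfCardEq hcard with heqv
  refine ⟨fun i => g ↑(eqv.symm i), fun i => ↑(eqv.symm i), fun i => ?_, fun i j hij => ?_, fun i => ?_⟩
  · have : (↑(eqv.symm i) : Fin (m+1) →₀ ℕ) ∈ T := hT'sub (hT'fin.mem_toFinset.mp (eqv.symm i).2)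
    exact hgW _ this
  · have := Subtype.val_injective hij
    exact eqv.symm.injective this
  · have : (↑(eqv.symm i) : Fin (m+1) →₀ ℕ) ∈ T := hT'sub (hT'fin.mem_toFinset.mp (eqv.symm i).2)
    exact hglead _ this

end Aux2


section Aux3
open MvPolynomial
variable {m : ℕ} {Fq : Type} [Field Fq]

lemma degree_univ_sum (s : Fin (m+1) →₀ ℕ) : s.degree = ∑ i, s i :=
  Finset.sum_subset (Finset.subset_univ _) (fun x _ hx => Finsupp.notMem_support_iff.mp hx)

lemma homog_smul {e : ℕ} (c : Fq) {P : MvPolynomial (Fin (m+1)) Fq}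
    (h : P.IsHomogeneous e) : (c • P).IsHomogeneous e := by
  rw [smul_eq_C_mul]
  simpa using (isHomogeneous_C (Fin (m+1)) c).mul h

lemma pow_qsub {q : ℕ} [Fintype Fq] (hq2 : 2 ≤ q) (hcard : Fintype.card Fq = q)
    (a : Fq) {s : ℕ} (hs : 1 ≤ s) : a ^ (s + (q-1)) = a ^ s := by
  have h1 : s + (q - 1) = (s - 1) + q := by omega
  have h2 : a ^ q = a := by rw [← hcard]; exact FiniteField.pow_card a
  calc a ^ (s + (q-1)) = a ^ (s-1) * a ^ q := by rw [h1, pow_add]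
    _ = a ^ (s-1) * a ^ 1 := by rw [h2, pow_one]
    _ = a ^ s := by rw [← pow_add]; congr 1; omega

section Case1
variable {q e : ℕ} [Fintype Fq]

/-- the rewritten monomial exponent in the non-reduced case -/
noncomputable def nuRew (q : ℕ) (s₀ : Fin (m+1) →₀ ℕ) (j ℓ : Fin (m+1)) : Fin (m+1) →₀ ℕ :=
  Finsupp.equivFunOnFinite.symm
    (Function.update (Function.update (⇑s₀) ℓ (s₀ ℓ + (q-1))) j (s₀ j - (q-1)))

lemma nuRew_apply (q : ℕ) (s₀ : Fin (m+1) →₀ ℕ) (j ℓ : Fin (m+1)) :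
    ⇑(nuRew q s₀ j ℓ) = Function.update (Function.update (⇑s₀) ℓ (s₀ ℓ + (q-1))) j (s₀ j - (q-1)) :=
  rfl

variable {s₀ : Fin (m+1) →₀ ℕ} {j ℓ : Fin (m+1)}

lemma nuRew_sum (hjl : j < ℓ) (hlpos : 0 < s₀ ℓ) (hqj : q ≤ s₀ j) (hq2 : 2 ≤ q)
    (hsum : ∑ i, s₀ i = e) : ∑ i, (nuRew q s₀ j ℓ) i = e := by
  have hne : j ≠ ℓ := ne_of_lt hjl
  have hmem : ℓ ∈ (Finset.univ : Finset (Fin (m+1))).erase j :=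
    Finset.mem_erase.mpr ⟨hne.symm, Finset.mem_univ _⟩
  set b := ⇑(nuRew q s₀ j ℓ) with hb
  have h1 : ∑ i, b i = b j + ∑ i ∈ Finset.univ.erase j, b i :=
    (Finset.add_sum_erase _ _ (Finset.mem_univ j)).symm
  have h2 : ∑ i ∈ Finset.univ.erase j, b i = b ℓ + ∑ i ∈ (Finset.univ.erase j).erase ℓ, b i :=
    (Finset.add_sum_erase _ _ hmem).symm
  have h1' : ∑ i, s₀ i = s₀ j + ∑ i ∈ Finset.univ.erase j, s₀ i :=
    (Finset.add_sum_erase _ _ (Finset.mem_univ j)).symm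
  have h2' : ∑ i ∈ Finset.univ.erase j, s₀ i
      = s₀ ℓ + ∑ i ∈ (Finset.univ.erase j).erase ℓ, s₀ i :=
    (Finset.add_sum_erase _ _ hmem).symm
  have hcong : ∑ i ∈ (Finset.univ.erase j).erase ℓ, b i
      = ∑ i ∈ (Finset.univ.erase j).erase ℓ, s₀ i := by
    refine Finset.sum_congr rfl (fun i hi => ?_)
    obtain ⟨hil, hij, -⟩ : i ≠ ℓ ∧ i ≠ j ∧ True := by
      have h := Finset.mem_erase.mp hi
      exact ⟨h.1, (Finset.mem_erase.mp h.2).1, trivial⟩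
    rw [hb, nuRew_apply, Function.update_of_ne hij, Function.update_of_ne hil]
  have hbj : b j = s₀ j - (q-1) := by rw [hb, nuRew_apply]; simp
  have hbl : b ℓ = s₀ ℓ + (q-1) := by
    rw [hb, nuRew_apply, Function.update_of_ne hne.symm]; simp
  omega

lemma nuRew_lt (hjl : j < ℓ) (hqj : q ≤ s₀ j) (hq2 : 2 ≤ q) :
    lexv (nuRew q s₀ j ℓ) < lexv s₀ := by
  have hne : j ≠ ℓ := ne_of_lt hjl
  refine lex_lt_of j (fun k hk => ?_) ?_
  · rw [nuRew_apply, Function.update_of_ne (ne_of_lt hk),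
      Function.update_of_ne (ne_of_lt (lt_trans hk hjl))]
  · rw [nuRew_apply]; simp only [Function.update_self]; omega

lemma nuRew_eval (hjl : j < ℓ) (hlpos : 0 < s₀ ℓ) (hqj : q ≤ s₀ j) (hq2 : 2 ≤ q)
    (hcard : Fintype.card Fq = q) (c : Fq) (y : Fin (m+1) → Fq) :
    eval y (monomial (nuRew q s₀ j ℓ) c) = eval y (monomial s₀ c) := by
  have hne : j ≠ ℓ := ne_of_lt hjl
  have hmem : ℓ ∈ (Finset.univ : Finset (Fin (m+1))).erase j :=
    Finset.mem_erase.mpr ⟨hne.symm, Finset.mem_univ _⟩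
  rw [eval_monomial, eval_monomial]
  congr 1
  rw [Finsupp.prod_fintype _ _ (fun i => pow_zero _),
    Finsupp.prod_fintype _ _ (fun i => pow_zero _)]
  set b := ⇑(nuRew q s₀ j ℓ) with hb
  have h1 : ∏ i, y i ^ b i = y j ^ b j * ∏ i ∈ Finset.univ.erase j, y i ^ b i :=
    (Finset.mul_prod_erase _ _ (Finset.mem_univ j)).symm
  have h2 : ∏ i ∈ Finset.univ.erase j, y i ^ b i
      = y ℓ ^ b ℓ * ∏ i ∈ (Finset.univ.erase j).erase ℓ, y i ^ b i :=
    (Finset.mul_prod_erase _ _ hmem).symm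
  have h1' : ∏ i, y i ^ s₀ i = y j ^ s₀ j * ∏ i ∈ Finset.univ.erase j, y i ^ s₀ i :=
    (Finset.mul_prod_erase _ _ (Finset.mem_univ j)).symm
  have h2' : ∏ i ∈ Finset.univ.erase j, y i ^ s₀ i
      = y ℓ ^ s₀ ℓ * ∏ i ∈ (Finset.univ.erase j).erase ℓ, y i ^ s₀ i :=
    (Finset.mul_prod_erase _ _ hmem).symm
  have hcong : ∏ i ∈ (Finset.univ.erase j).erase ℓ, y i ^ b i
      = ∏ i ∈ (Finset.univ.erase j).erase ℓ, y i ^ s₀ i := by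
    refine Finset.prod_congr rfl (fun i hi => ?_)
    have h := Finset.mem_erase.mp hi
    rw [hb, nuRew_apply, Function.update_of_ne (Finset.mem_erase.mp h.2).1,
      Function.update_of_ne h.1]
  have hbj : b j = s₀ j - (q-1) := by rw [hb, nuRew_apply]; simp
  have hbl : b ℓ = s₀ ℓ + (q-1) := by
    rw [hb, nuRew_apply, Function.update_of_ne hne.symm]; simp
  rw [h1, h2, h1', h2', hcong, hbj, hbl]
  have e1 : y ℓ ^ (s₀ ℓ + (q-1)) = y ℓ ^ s₀ ℓ := pow_qsub hq2 hcard _ hlpos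
  have e2 : y j ^ (s₀ j - (q-1)) = y j ^ s₀ j := by
    conv_rhs => rw [show s₀ j = (s₀ j - (q-1)) + (q-1) by omega]
    exact (pow_qsub hq2 hcard _ (by omega)).symm
  rw [e1, e2]

end Case1

/-- The key reduction lemma. -/
lemma good {q d e r : ℕ} [Fintype Fq] (hq2 : 2 ≤ q) (hcard : Fintype.card Fq = q)
    {F : Fin r → MvPolynomial (Fin (m+1)) Fq} {L : Fin r → (Fin (m+1) →₀ ℕ)}
    (hhom : ∀ i, (F i).IsHomogeneous d) (hlead : ∀ i, Lead (F i) (L i)) :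
    ∀ (G : MvPolynomial (Fin (m+1)) Fq), G.IsHomogeneous e →
    ∃ C : MvPolynomial (Fin (m+1)) Fq,
      (∀ s ∈ C.support,
        (⇑s : Fin (m+1) → ℕ) ∈ footprint q m e (Set.range (fun i => ⇑(L i)))) ∧
      ∀ y : Fin (m+1) → Fq, (∀ i, eval y (F i) = 0) → eval y G = eval y C := by
  set S := Set.range (fun i => ⇑(L i)) with hS
  suffices h : ∀ N (G : MvPolynomial (Fin (m+1)) Fq), G.IsHomogeneous e → mea m e G ≤ N →
      ∃ C : MvPolynomial (Fin (m+1)) Fq,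
      (∀ s ∈ C.support, (⇑s : Fin (m+1) → ℕ) ∈ footprint q m e S) ∧
      ∀ y : Fin (m+1) → Fq, (∀ i, eval y (F i) = 0) → eval y G = eval y C by
    exact fun G hG => h (mea m e G) G hG le_rfl
  intro N
  induction N using Nat.strong_induction_on with
  | _ N ih =>
    intro G hGhom hmea
    rcases eq_or_ne G 0 with rfl | hG0
    · exact ⟨0, by simp, by simp⟩
    obtain ⟨s₀, hl⟩ := exists_lead hG0
    have hsum : ∑ i, s₀ i = e := sum_eq_of_mem_support hGhom hl.1
    set c : Fq := coeff s₀ G with hc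
    have hcne : c ≠ 0 := mem_support_iff.mp hl.1
    by_cases hred : ProjReduced q m ⇑s₀
    · by_cases hsh : (⇑s₀ : Fin (m+1) → ℕ) ∈ shadow q m e S
      · -- shadow case: reduce by F i₀
        obtain ⟨hMbar, a, haS, hle⟩ := hsh
        obtain ⟨i₀, ha⟩ := haS
        have hle' : ∀ i, L i₀ i ≤ s₀ i := fun i => by
          have := hle i; rwa [← ha] at this
        set u : Fin (m+1) →₀ ℕ := s₀ - L i₀ with hu
        have huL : u + L i₀ = s₀ := by
          ext i
          simp only [Finsupp.coe_add, Pi.add_apply, hu, Finsupp.tsub_apply]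
          have := hle' i; omega
        set c₀ : Fq := coeff (L i₀) (F i₀) with hc₀
        have hc₀ne : c₀ ≠ 0 := mem_support_iff.mp (hlead i₀).1
        set P := monomial u (1 : Fq) * F i₀ with hP
        have hPcoeff : coeff s₀ P = c₀ := by
          rw [hP, ← huL, coeff_monomial_mul, one_mul]
        have hdsum : ∑ i, (L i₀) i = d := sum_eq_of_mem_support (hhom i₀) (hlead i₀).1
        have hde : d ≤ e := by
          rw [← hdsum, ← hsum]
          exact Finset.sum_le_sum (fun i _ => hle' i)
        have husum : ∑ i, u i = e - d := by
          have := congrArg (fun v : Fin (m+1) →₀ ℕ => ∑ i, v i) huL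
          simp only [Finsupp.coe_add, Pi.add_apply, Finset.sum_add_distrib] at this
          omega
        have hPhom : P.IsHomogeneous e := by
          have h1 : (monomial u (1:Fq)).IsHomogeneous (e - d) :=
            isHomogeneous_monomial _ (by rw [degree_univ_sum]; exact husum)
          have := h1.mul (hhom i₀)
          rwa [show e - d + d = e by omega] at this
        have hPsupp : ∀ t ∈ P.support, lexv t ≤ lexv s₀ := by
          intro t ht
          have := support_mul _ _ ht
          rw [support_monomial] at this
          simp only [if_neg (one_ne_zero : (1:Fq) ≠ 0)] at this
          obtain ⟨t₁, ht₁, t₂, ht₂, rfl⟩ := Finset.mem_add.mp this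
          obtain rfl : t₁ = u := Finset.mem_singleton.mp ht₁
          have h2 : lexv t₂ ≤ lexv (L i₀) := (hlead i₀).2 t₂ ht₂
          have h3 : lexv (u + t₂) ≤ lexv (u + L i₀) := by
            simp only [lexv, Finsupp.coe_add]
            exact lex_add_le _ h2
          rwa [huL] at h3
        set G' := G - (c / c₀) • P with hG'
        have hG'hom : G'.IsHomogeneous e := hGhom.sub (homog_smul _ hPhom)
        have hG'supp : ∀ t ∈ G'.support, lexv t < lexv s₀ := by
          refine supp_lt_of_killed (fun t ht => ?_) ?_
          · rcases Finset.mem_union.mp (MvPolynomial.support_sub _ _ _ ht) with h | h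
            · exact hl.2 t h
            · exact hPsupp t (Finsupp.support_smul h)
          · rw [hG']
            simp only [coeff_sub, coeff_smul, smul_eq_mul, hPcoeff]
            rw [div_mul_cancel₀ _ hc₀ne, ← hc, sub_self]
        have hmlt := mea_lt hGhom hl hG'supp
        obtain ⟨C, hC1, hC2⟩ := ih (mea m e G') (lt_of_lt_of_le hmlt hmea) G' hG'hom le_rfl
        refine ⟨C, hC1, fun y hy => ?_⟩
        have : eval y G = eval y G' := by
          rw [hG']
          simp [smul_eval, hy i₀, hP]
        rw [this]; exact hC2 y hy
      · -- footprint case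
        have hfp : (⇑s₀ : Fin (m+1) → ℕ) ∈ footprint q m e S := ⟨⟨hred, hsum⟩, hsh⟩
        set G' := G - monomial s₀ c with hG'
        have hG'hom : G'.IsHomogeneous e :=
          hGhom.sub (isHomogeneous_monomial _ (by rw [degree_univ_sum]; exact hsum))
        have hG'supp : ∀ t ∈ G'.support, lexv t < lexv s₀ := by
          refine supp_lt_of_killed (fun t ht => ?_) ?_
          · rcases Finset.mem_union.mp (MvPolynomial.support_sub _ _ _ ht) with h | h
            · exact hl.2 t h
            · rw [support_monomial, if_neg hcne] at h
              obtain rfl := Finset.mem_singleton.mp h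
              exact le_refl _
          · rw [hG']; simp [coeff_monomial]; exact sub_eq_zero.mpr hc.symm
        have hmlt := mea_lt hGhom hl hG'supp
        obtain ⟨C, hC1, hC2⟩ := ih (mea m e G') (lt_of_lt_of_le hmlt hmea) G' hG'hom le_rfl
        refine ⟨C + monomial s₀ c, fun s hs => ?_, fun y hy => ?_⟩
        · rcases Finset.mem_union.mp (MvPolynomial.support_add hs) with h | h
          · exact hC1 s h
          · rw [support_monomial, if_neg hcne] at h
            obtain rfl := Finset.mem_singleton.mp h
            exact hfp
        · have : eval y G = eval y G' + eval y (monomial s₀ c) := by rw [hG']; ring_nf; simp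
          rw [this, hC2 y hy, map_add]
    · -- non-reduced case
      simp only [ProjReduced, not_forall] at hred
      obtain ⟨j, ⟨ℓ, hjl, hlpos⟩, hqj'⟩ := hred
      have hqj : q ≤ s₀ j := by omega
      set ν' := nuRew q s₀ j ℓ with hν'
      have hltν : lexv ν' < lexv s₀ := nuRew_lt hjl hqj hq2
      have hνne : ν' ≠ s₀ := fun h => absurd (congrArg lexv h) (ne_of_lt hltν)
      set G' := G - monomial s₀ c + monomial ν' c with hG'
      have hG'hom : G'.IsHomogeneous e :=
        (hGhom.sub (isHomogeneous_monomial _ (by rw [degree_univ_sum]; exact hsum))).add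
          (isHomogeneous_monomial _
            (by rw [degree_univ_sum]; exact nuRew_sum hjl hlpos hqj hq2 hsum))
      have hG'supp : ∀ t ∈ G'.support, lexv t < lexv s₀ := by
        refine supp_lt_of_killed (fun t ht => ?_) ?_
        · rcases Finset.mem_union.mp (MvPolynomial.support_add ht) with h | h
          · rcases Finset.mem_union.mp (MvPolynomial.support_sub _ _ _ h) with h' | h'
            · exact hl.2 t h'
            · rw [support_monomial, if_neg hcne] at h'
              obtain rfl := Finset.mem_singleton.mp h'
              exact le_refl _
          · rw [support_monomial, if_neg hcne] at h
            obtain rfl := Finset.mem_singleton.mp h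
            exact le_of_lt hltν
        · rw [hG']
          simp [coeff_monomial, if_neg hνne]; exact sub_eq_zero.mpr hc.symm
      have hmlt := mea_lt hGhom hl hG'supp
      obtain ⟨C, hC1, hC2⟩ := ih (mea m e G') (lt_of_lt_of_le hmlt hmea) G' hG'hom le_rfl
      refine ⟨C, hC1, fun y hy => ?_⟩
      have heq : eval y G = eval y G' := by
        rw [hG']
        have := nuRew_eval (Fq := Fq) hjl hlpos hqj hq2 hcard c y
        rw [map_add, map_sub, show (eval y) ((monomial ν') c) = (eval y) ((monomial s₀) c) from this]
        ring
      rw [heq]; exact hC2 y hy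

end Aux3


section Aux4
open MvPolynomial
variable {m : ℕ} {Fq : Type} [Field Fq]

lemma MbarDeg_finite (q e : ℕ) : (MbarDeg q m e).Finite := by
  refine Set.Finite.subset (Set.Finite.pi (fun i : Fin (m+1) => Set.finite_Iic e)) ?_
  rintro b ⟨-, hsum⟩
  intro i _
  exact Set.mem_Iic.mpr (hsum ▸ Finset.single_le_sum (fun j _ => Nat.zero_le (b j))
    (Finset.mem_univ i))

noncomputable def linPoly (c : Fin (m+1) → Fq) : MvPolynomial (Fin (m+1)) Fq :=
  ∑ i, MvPolynomial.C (c i) * MvPolynomial.X i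

lemma linPoly_homog (c : Fin (m+1) → Fq) : (linPoly c).IsHomogeneous 1 :=
  IsHomogeneous.sum _ _ _ (fun i _ => by
    simpa using (isHomogeneous_C (Fin (m+1)) (c i)).mul (isHomogeneous_X Fq i))

lemma eval_linPoly (c y : Fin (m+1) → Fq) : eval y (linPoly c) = ∑ i, c i * y i := by
  simp [linPoly]

lemma exists_sep (p p' : Projectivization Fq (Fin (m+1) → Fq)) (h : p' ≠ p) :
    ∃ c : Fin (m+1) → Fq, (∑ i, c i * p'.rep i = 0) ∧ ∑ i, c i * p.rep i ≠ 0 := by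
  set K : Submodule Fq (Fin (m+1) → Fq) := Submodule.span Fq {p'.rep} with hK
  have hnot : p.rep ∉ K := by
    intro hmem
    obtain ⟨a, ha⟩ := Submodule.mem_span_singleton.mp hmem
    have hane : a ≠ 0 := by
      rintro rfl
      exact Projectivization.rep_nonzero p (by simpa using ha.symm)
    apply h
    have h1 := Projectivization.mk_rep p
    have h2 := Projectivization.mk_rep p'
    rw [← h1, ← h2]
    symm
    rw [Projectivization.mk_eq_mk_iff]
    exact ⟨Units.mk0 a hane, ha⟩
  have hπ : K.mkQ p.rep ≠ 0 := by
    simpa [Submodule.Quotient.mk_eq_zero] using hnot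
  have hψ : ∃ ψ : Module.Dual Fq ((Fin (m+1) → Fq) ⧸ K), ψ (K.mkQ p.rep) ≠ 0 := by
    by_contra hcon
    push_neg at hcon
    exact hπ ((Module.forall_dual_apply_eq_zero_iff Fq _).mp hcon)
  obtain ⟨ψ, hψ⟩ := hψ
  set φ := ψ.comp K.mkQ with hφ
  have hps : ∀ i : Fin (m+1), (Pi.single i (1:Fq) : Fin (m+1) → Fq)
      = fun j => if i = j then 1 else 0 :=
    fun i => funext fun j => by rw [Pi.single_apply]; simp [eq_comm]
  have hval : ∀ y : Fin (m+1) → Fq, ∑ i, φ (Pi.single i 1) * y i = φ y := by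
    intro y
    conv_rhs => rw [pi_eq_sum_univ y, map_sum]
    refine Finset.sum_congr rfl (fun i _ => ?_)
    rw [map_smul, smul_eq_mul, mul_comm, hps]
  refine ⟨fun i => φ (Pi.single i 1), ?_, ?_⟩
  · rw [hval]
    have hmem : p'.rep ∈ K := Submodule.mem_span_singleton_self _
    have : K.mkQ p'.rep = 0 := (Submodule.Quotient.mk_eq_zero K).mpr hmem
    rw [hφ, LinearMap.comp_apply, this, map_zero]
  · rw [hval]
    exact hψ

lemma exists_delta [Fintype Fq] [Fintype (Projectivization Fq (Fin (m+1) → Fq))]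
    (p : Projectivization Fq (Fin (m+1) → Fq)) {e : ℕ}
    (he : Fintype.card (Projectivization Fq (Fin (m+1) → Fq)) - 1 ≤ e) :
    ∃ G : MvPolynomial (Fin (m+1)) Fq, G.IsHomogeneous e ∧
      eval p.rep G ≠ 0 ∧ ∀ p', p' ≠ p → eval p'.rep G = 0 := by
  have hccard : 1 ≤ Fintype.card (Projectivization Fq (Fin (m+1) → Fq)) :=
    Fintype.card_pos_iff.mpr ⟨p⟩
  have hsel : ∀ p' : Projectivization Fq (Fin (m+1) → Fq), p' ≠ p →
      ∃ c : Fin (m+1) → Fq, (∑ i, c i * p'.rep i = 0) ∧ ∑ i, c i * p.rep i ≠ 0 :=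
    fun p' h => exists_sep p p' h
  choose! cf hcf1 hcf2 using hsel
  obtain ⟨i₀, hi₀⟩ : ∃ i₀, p.rep i₀ ≠ 0 := by
    by_contra hcon
    push_neg at hcon
    exact Projectivization.rep_nonzero p (funext hcon)
  set t := e - (Fintype.card (Projectivization Fq (Fin (m+1) → Fq)) - 1) with ht
  set G := (∏ p' ∈ Finset.univ.erase p, linPoly (cf p')) * (X i₀ : MvPolynomial (Fin (m+1)) Fq) ^ t
    with hG
  refine ⟨G, ?_, ?_, ?_⟩
  · have h1 : (∏ p' ∈ Finset.univ.erase p, linPoly (cf p')).IsHomogeneous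
        (∑ _p' ∈ Finset.univ.erase p, 1) :=
      IsHomogeneous.prod _ _ _ (fun p' _ => linPoly_homog _)
    have h2 : ((X i₀ : MvPolynomial (Fin (m+1)) Fq) ^ t).IsHomogeneous t := by
      simpa using (isHomogeneous_X Fq i₀).pow t
    have := h1.mul h2
    have hcount : (∑ _p' ∈ Finset.univ.erase p, 1)
        = Fintype.card (Projectivization Fq (Fin (m+1) → Fq)) - 1 := by
      rw [Finset.sum_const, smul_eq_mul, mul_one, Finset.card_erase_of_mem (Finset.mem_univ p),
        Finset.card_univ]
    rw [hcount] at this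
    rwa [show Fintype.card (Projectivization Fq (Fin (m+1) → Fq)) - 1 + t = e by omega] at this
  · rw [hG, map_mul, map_prod, map_pow]
    apply mul_ne_zero
    · rw [Finset.prod_ne_zero_iff]
      intro p' hp'
      rw [eval_linPoly]
      exact hcf2 p' (Finset.mem_erase.mp hp').1
    · exact pow_ne_zero _ (by simpa using hi₀)
  · intro p' hp'
    rw [hG, map_mul, map_prod]
    apply mul_eq_zero_of_left
    refine Finset.prod_eq_zero (Finset.mem_erase.mpr ⟨hp', Finset.mem_univ _⟩) ?_
    rw [eval_linPoly]
    exact hcf1 p' hp'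

end Aux4


section Aux5
open MvPolynomial
variable {m : ℕ} {Fq : Type} [Field Fq]

lemma count_le {q d e r : ℕ} [Fintype Fq]
    [Fintype (Projectivization Fq (Fin (m+1) → Fq))]
    (hq2 : 2 ≤ q) (hcard : Fintype.card Fq = q)
    {F : Fin r → MvPolynomial (Fin (m+1)) Fq} {L : Fin r → (Fin (m+1) →₀ ℕ)}
    (hhom : ∀ i, (F i).IsHomogeneous d) (hlead : ∀ i, Lead (F i) (L i))
    (he : Fintype.card (Projectivization Fq (Fin (m+1) → Fq)) - 1 ≤ e) :
    {p : Projectivization Fq (Fin (m+1) → Fq) | ∀ i, eval p.rep (F i) = 0}.ncard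
      ≤ (footprint q m e (Set.range (fun i => ⇑(L i)))).ncard := by
  set V : Set (Projectivization Fq (Fin (m+1) → Fq)) :=
    {p : Projectivization Fq (Fin (m+1) → Fq) | ∀ i, eval p.rep (F i) = 0} with hV
  set S := Set.range (fun i => ⇑(L i)) with hS
  set Δ := footprint q m e S with hΔ
  have hΔfin : Δ.Finite := (MbarDeg_finite q e).subset Set.diff_subset
  set Φ : (Fin (m+1) → ℕ) → (↥V → Fq) := fun μ p => ∏ i, (↑p : Projectivization Fq (Fin (m+1) → Fq)).rep i ^ μ i with hΦ
  have hsingle : ∀ p₀ : ↥V,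
      (fun p : ↥V => if p₀ = p then (1:Fq) else 0) ∈ Submodule.span Fq (Φ '' Δ) := by
    intro p₀
    obtain ⟨G, hGhom, hGne, hGzero⟩ := exists_delta (↑p₀ : Projectivization Fq (Fin (m+1) → Fq)) he
    obtain ⟨C, hC1, hC2⟩ := good hq2 hcard hhom hlead G hGhom
    set k := eval (↑p₀ : Projectivization Fq (Fin (m+1) → Fq)).rep G with hk
    have hkC : eval (↑p₀ : Projectivization Fq (Fin (m+1) → Fq)).rep C = k := (hC2 _ p₀.2).symm
    have heqfun : (fun p : ↥V => if p₀ = p then (1:Fq) else 0)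
        = fun p : ↥V => k⁻¹ * eval (↑p : Projectivization Fq (Fin (m+1) → Fq)).rep C := by
      funext p
      rcases eq_or_ne p₀ p with rfl | hne
      · rw [if_pos rfl, hkC, inv_mul_cancel₀ hGne]
      · rw [if_neg hne]
        have hPne : (↑p : Projectivization Fq (Fin (m+1) → Fq)) ≠ ↑p₀ := fun hcon => hne (Subtype.ext hcon.symm)
        have h0 : eval (↑p : Projectivization Fq (Fin (m+1) → Fq)).rep G = 0 := hGzero _ hPne
        have := hC2 (↑p : Projectivization Fq (Fin (m+1) → Fq)).rep p.2
        rw [← this, h0, mul_zero]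
    rw [heqfun]
    have hrepr : (fun p : ↥V => k⁻¹ * eval (↑p : Projectivization Fq (Fin (m+1) → Fq)).rep C)
        = ∑ s ∈ C.support, (k⁻¹ * coeff s C) • Φ ⇑s := by
      funext p
      rw [Finset.sum_apply]
      simp only [Pi.smul_apply, smul_eq_mul, hΦ]
      rw [eval_eq', Finset.mul_sum]
      exact Finset.sum_congr rfl (fun s _ => by ring)
    rw [hrepr]
    refine Submodule.sum_mem _ (fun s hs => Submodule.smul_mem _ _ ?_)
    exact Submodule.subset_span ⟨⇑s, hC1 s hs, rfl⟩
  have htop : Submodule.span Fq (Φ '' Δ) = ⊤ := by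
    rw [eq_top_iff]
    intro f _
    rw [pi_eq_sum_univ f]
    refine Submodule.sum_mem _ (fun p₀ _ => Submodule.smul_mem _ _ ?_)
    exact hsingle p₀
  have hcard1 : V.ncard = Module.finrank Fq (↥V → Fq) := by
    rw [Module.finrank_pi Fq, Set.ncard_eq_toFinset_card', Set.toFinset_card]
  have hcard2 : Module.finrank Fq (↥V → Fq) ≤ Δ.ncard := by
    have hfin2 : (Φ '' Δ).Finite := hΔfin.image Φ
    have h1 : Module.finrank Fq ↥(Submodule.span Fq (Φ '' Δ)) ≤ (Φ '' Δ).ncard := by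
      have := finrank_span_finset_le_card (R := Fq) hfin2.toFinset
      rw [Set.Finite.coe_toFinset] at this
      rw [Set.ncard_eq_toFinset_card _ hfin2]
      exact this
    have h2 : (Φ '' Δ).ncard ≤ Δ.ncard := Set.ncard_image_le hΔfin
    have h3 : Module.finrank Fq ↥(Submodule.span Fq (Φ '' Δ))
        = Module.finrank Fq (↥V → Fq) := by
      rw [htop]
      exact finrank_top Fq _
    omega
  omega

end Aux5


open MvPolynomial

/-- `ē_r(d, m)` is attained by a family of linearly independent,
projectively reduced homogeneous polynomials with distinct leading monomials; and
consequently `ē_r(d, m) ≤ A_r(d, m; e)` for all sufficiently large `e`. -/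
theorem statement_10 (q m d r rd : ℕ) (hq : IsPrimePow q) (hm : 0 < m)
    (Fq : Type) [Field Fq] [Fintype Fq] (hcard : Fintype.card Fq = q)
    (hrd : rd = (m+d).choose d - (MbarDeg q m d).ncard)
    (hr1 : 1 ≤ r) (hr2 : r ≤ (m+d).choose d - rd) :
    (∃ F : Fin r → MvPolynomial (Fin (m+1)) Fq,
      LinearIndependent Fq F ∧ (∀ i, (F i).IsHomogeneous d) ∧
      (∀ i, ∀ s ∈ (F i).support, ProjReduced q m ⇑s) ∧
      (∃ L : Fin r → (Fin (m+1) → ℕ), Function.Injective L ∧ ∀ i, IsLeadMon (F i) (L i)) ∧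
      projPoints F = ebar q Fq d m r) ∧
    ∃ e₀ : ℕ, ∀ e ≥ e₀, ebar q Fq d m r ≤ Ar q m d r e := by
  classical
  have hq2 : 2 ≤ q := hq.two_le
  have hfinP : Finite (Projectivization Fq (Fin (m+1) → Fq)) := by
    unfold Projectivization; infer_instance
  letI : Fintype (Projectivization Fq (Fin (m+1) → Fq)) := Fintype.ofFinite _
  set ES : Set ℕ := {n | ∃ F : Fin r → MvPolynomial (Fin (m+1)) Fq,
    LinearIndependent Fq F ∧ (∀ i, (F i).IsHomogeneous d) ∧
    (∀ i, ∀ s ∈ (F i).support, ProjReduced q m ⇑s) ∧ n = projPoints F} with hES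
  have hebar : ebar q Fq d m r = sSup ES := rfl
  -- boundedness
  have hbdd : BddAbove ES := by
    refine ⟨Fintype.card (Projectivization Fq (Fin (m+1) → Fq)), fun n hn => ?_⟩
    obtain ⟨F, -, -, -, rfl⟩ := hn
    calc projPoints F ≤ (Set.univ : Set (Projectivization Fq (Fin (m+1) → Fq))).ncard :=
          Set.ncard_le_ncard (Set.subset_univ _) Set.finite_univ
      _ = Fintype.card _ := by rw [Set.ncard_univ, Nat.card_eq_fintype_card]
  -- nonemptiness via a family of distinct reduced monomials
  have hrn : r ≤ (MbarDeg q m d).ncard := by omega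
  obtain ⟨T', hT'sub, hT'card⟩ := Set.exists_subset_card_eq hrn
  have hT'fin : T'.Finite := (MbarDeg_finite q d).subset hT'sub
  have hTc : hT'fin.toFinset.card = r := by
    rw [← Set.ncard_eq_toFinset_card _ hT'fin]; exact hT'card
  set eqv := Finset.equivFinOfCardEq hTc with heqv
  set Lm : Fin r → (Fin (m+1) →₀ ℕ) :=
    fun i => Finsupp.equivFunOnFinite.symm ↑(eqv.symm i) with hLm
  set Fmon : Fin r → MvPolynomial (Fin (m+1)) Fq := fun i => monomial (Lm i) 1 with hFmon
  have hmemT : ∀ i, (↑(eqv.symm i) : Fin (m+1) → ℕ) ∈ MbarDeg q m d :=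
    fun i => hT'sub (hT'fin.mem_toFinset.mp (eqv.symm i).2)
  have hLminj : Function.Injective Lm := fun i j hij => by
    have h1 := Finsupp.equivFunOnFinite.symm.injective hij
    exact eqv.symm.injective (Subtype.val_injective h1)
  have hsuppF : ∀ i, (Fmon i).support = {Lm i} := fun i => by
    rw [hFmon, support_monomial, if_neg (one_ne_zero : (1:Fq) ≠ 0)]
  have hleadF : ∀ i, Lead (Fmon i) (Lm i) := fun i => by
    refine ⟨by rw [hsuppF i]; exact Finset.mem_singleton_self _, fun t ht => ?_⟩
    rw [hsuppF i] at ht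
    obtain rfl := Finset.mem_singleton.mp ht
    exact le_refl _
  have hliF : LinearIndependent Fq Fmon := li_of_lead hLminj hleadF
  have hhomF : ∀ i, (Fmon i).IsHomogeneous d := fun i => by
    refine isHomogeneous_monomial _ ?_
    rw [degree_univ_sum]
    exact (hmemT i).2
  have hredF : ∀ i, ∀ s ∈ (Fmon i).support, ProjReduced q m ⇑s := fun i s hs => by
    rw [hsuppF i] at hs
    obtain rfl := Finset.mem_singleton.mp hs
    exact (hmemT i).1
  have hne : ES.Nonempty := ⟨projPoints Fmon, Fmon, hliF, hhomF, hredF, rfl⟩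
  -- attain the sup
  obtain ⟨F₀, hli₀, hhom₀, hred₀, hval₀⟩ := Nat.sSup_mem hne hbdd
  -- gaussian elimination
  obtain ⟨F', L, hspan', hLinj, hlead'⟩ := elimination hli₀ hhom₀
  have hli' : LinearIndependent Fq F' := li_of_lead hLinj hlead'
  have hhom' : ∀ i, (F' i).IsHomogeneous d := fun i => homog_of_mem_span hhom₀ (hspan' i)
  have hred' : ∀ i, ∀ s ∈ (F' i).support, ProjReduced q m ⇑s :=
    fun i => reduced_of_mem_span hred₀ (hspan' i)
  have hVsub : {p : Projectivization Fq (Fin (m+1) → Fq) | ∀ i, eval p.rep (F₀ i) = 0}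
      ⊆ {p : Projectivization Fq (Fin (m+1) → Fq) | ∀ i, eval p.rep (F' i) = 0} :=
    fun p hp i => eval_zero_of_mem_span hp (hspan' i)
  have hge : projPoints F₀ ≤ projPoints F' :=
    Set.ncard_le_ncard hVsub (Set.toFinite _)
  have hle : projPoints F' ≤ sSup ES := le_csSup hbdd ⟨F', hli', hhom', hred', rfl⟩
  have hval : projPoints F' = ebar q Fq d m r := by
    rw [hebar]
    refine le_antisymm hle ?_
    calc sSup ES = projPoints F₀ := hval₀
      _ ≤ projPoints F' := hge
  constructor
  · exact ⟨F', hli', hhom', hred',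
      ⟨fun i => ⇑(L i),
        fun i j hij => hLinj (DFunLike.coe_injective hij),
        fun i => ⟨L i, (hlead' i).1, rfl, (hlead' i).2⟩⟩, hval⟩
  · refine ⟨Fintype.card (Projectivization Fq (Fin (m+1) → Fq)), fun e he => ?_⟩
    set S := Set.range (fun i => ⇑(L i)) with hSdef
    have hcount : projPoints F' ≤ (footprint q m e S).ncard :=
      count_le hq2 hcard hhom' hlead' (by omega)
    have hSsub : S ⊆ MbarDeg q m d := by
      rintro _ ⟨i, rfl⟩
      exact ⟨hred' i (L i) (hlead' i).1, sum_eq_of_mem_support (hhom' i) (hlead' i).1⟩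
    have hScard : S.ncard = r := by
      rw [hSdef, ← Nat.card_coe_set_eq,
        Nat.card_range_of_injective (fun i j hij => hLinj (DFunLike.coe_injective hij)),
        Nat.card_eq_fintype_card, Fintype.card_fin]
    have hbddA : BddAbove {n | ∃ S : Set (Fin (m+1) → ℕ),
        S ⊆ MbarDeg q m d ∧ S.ncard = r ∧ n = (footprint q m e S).ncard} := by
      refine ⟨(MbarDeg q m e).ncard, fun n hn => ?_⟩
      obtain ⟨S', -, -, rfl⟩ := hn
      exact Set.ncard_le_ncard Set.diff_subset (MbarDeg_finite q e)
    have hAr : (footprint q m e S).ncard ≤ Ar q m d r e :=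
      le_csSup hbddA ⟨S, hSsub, hScard, rfl⟩
    calc ebar q Fq d m r = projPoints F' := hval.symm
      _ ≤ (footprint q m e S).ncard := hcount
      _ ≤ Ar q m d r e := hAr
end

section
/- Let q be a prime power, m a positive integer, and d, r integers with 1 ≤ d < q and 0 ≤ r ≤ C(m+d, d). If (m_d, ..., m_1) is the Macaulay d-tuple corresponding to C(m+d, d) − r, then H_r(d, m) = Σ_{a=1}^{d} ⌊q^{m_a}⌋, where ⌊q^{m_a}⌋ means q^{m_a} if m_a ≥ 0 and 0 if m_a = −1. -/
open scoped Classical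

namespace S14

lemma lex_not_le_iff {n : ℕ} (x y : Lex (Fin n → ℕ)) : ¬ x ≤ y ↔ y < x := by
  have htri : ∀ a b : Lex (Fin n → ℕ), a < b ∨ a = b ∨ b < a := by
    intro a b
    exact lt_trichotomy a b
  constructor
  · intro h
    rcases htri x y with h1 | h1 | h1
    · exact absurd (le_of_lt h1) h
    · exact absurd (le_of_eq h1) h
    · exact h1
  · intro h hle
    exact absurd (lt_of_le_of_lt hle h) (lt_irrefl x)

lemma lex_lt_succ_iff {ℓ : ℕ} (x y : Fin (ℓ+1) → ℕ) :
    toLex x < toLex y ↔ x 0 < y 0 ∨ (x 0 = y 0 ∧ toLex (Fin.tail x) < toLex (Fin.tail y)) := by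
  constructor
  · rintro ⟨i, h, hi⟩
    rcases Fin.eq_zero_or_eq_succ i with rfl | ⟨k, rfl⟩
    · exact Or.inl hi
    · refine Or.inr ⟨h 0 (Fin.succ_pos k), ⟨k, fun j hj => h j.succ ?_, hi⟩⟩
      exact Fin.succ_lt_succ_iff.mpr hj
  · rintro (h | ⟨h0, k, h, hk⟩)
    · exact ⟨0, fun j hj => absurd hj (Fin.not_lt_zero _ ), h⟩
    · refine ⟨k.succ, fun j hj => ?_, hk⟩
      rcases Fin.eq_zero_or_eq_succ j with rfl | ⟨j', rfl⟩
      · exact h0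
      · exact h j' (Fin.succ_lt_succ_iff.mp hj)

/-- Tuples with sum at most `d`. -/
noncomputable def Tset (ℓ d : ℕ) : Finset (Fin ℓ → ℕ) :=
  (Fintype.piFinset fun _ : Fin ℓ => Finset.range (d+1)).filter fun β => ∑ i, β i ≤ d

lemma mem_Tset {ℓ d : ℕ} {β : Fin ℓ → ℕ} : β ∈ Tset ℓ d ↔ ∑ i, β i ≤ d := by
  simp only [Tset, Finset.mem_filter, Fintype.mem_piFinset, Finset.mem_range, Nat.lt_succ_iff]
  refine ⟨fun h => h.2, fun h => ⟨fun i => le_trans ?_ h, h⟩⟩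
  exact Finset.single_le_sum (fun _ _ => Nat.zero_le _) (Finset.mem_univ i)

lemma card_filter_cons (ℓ d : ℕ) (P : (Fin (ℓ+1) → ℕ) → Prop) :
    ((Tset (ℓ+1) d).filter P).card
      = ∑ b ∈ Finset.range (d+1), ((Tset ℓ (d-b)).filter fun t => P (Fin.cons b t)).card := by
  apply Finset.card_eq_sum_card_fiberwise (f := fun β => β 0)
    (t := Finset.range (d+1)) ?_ |>.trans
  · refine Finset.sum_congr rfl fun b hb => ?_
    refine Finset.card_bij' (fun β _ => Fin.tail β) (fun t _ => Fin.cons b t) ?hi ?hj ?li ?ri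
    case hi =>
      rintro β hβ
      simp only [Finset.mem_filter] at hβ ⊢
      obtain ⟨⟨hβT, hP⟩, h0⟩ := hβ
      rw [mem_Tset] at hβT
      rw [Fin.sum_univ_succ] at hβT
      have h1 : ∑ i, Fin.tail β i = ∑ i : Fin ℓ, β i.succ := rfl
      constructor
      · rw [mem_Tset]; omega
      · subst h0; rw [Fin.cons_self_tail]; exact hP
    case hj =>
      rintro t ht
      simp only [Finset.mem_filter] at ht ⊢
      obtain ⟨htT, hP⟩ := ht
      rw [mem_Tset] at htT
      have hbd : b ≤ d := by simpa [Nat.lt_succ_iff] using hb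
      refine ⟨⟨?_, hP⟩, by simp⟩
      rw [mem_Tset, Fin.sum_univ_succ]
      simp only [Fin.cons_zero, Fin.cons_succ]
      omega
    case li =>
      intro β hβ
      simp only [Finset.mem_filter] at hβ
      obtain ⟨-, h0⟩ := hβ
      subst h0
      exact Fin.cons_self_tail β
    case ri =>
      intro t ht
      simp [Fin.tail_cons]
  · intro β hβ
    simp only [Finset.mem_coe, Finset.mem_filter] at hβ
    have := mem_Tset.mp hβ.1
    have h0 : β 0 ≤ ∑ i, β i := Finset.single_le_sum (fun _ _ => Nat.zero_le _) (Finset.mem_univ _)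
    simp only [Finset.mem_coe, Finset.mem_range, Nat.lt_succ_iff]
    omega


lemma hockey (K D : ℕ) : ∑ a ∈ Finset.range (D+1), (K + a).choose a = (K + D + 1).choose (K + 1) := by
  induction D with
  | zero => simp
  | succ D ih =>
    rw [Finset.sum_range_succ, ih]
    have h1 : (K + (D+1)).choose (D+1) = (K + D + 1).choose K := by
      rw [show K + (D+1) = K + D + 1 by ring]
      exact Nat.choose_symm_of_eq_add (by ring)
    rw [h1, show K + (D+1) + 1 = (K + D + 1) + 1 by ring]
    conv_rhs => rw [Nat.choose_succ_succ]
    simp only [Nat.succ_eq_add_one]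
    omega

lemma hockey_Icc (K D : ℕ) : ∑ a ∈ Finset.Icc 1 D, (K + a).choose a = (K + D + 1).choose (K + 1) - 1 := by
  have h := hockey K D
  have e : Finset.range (D+1) = insert 0 (Finset.Icc 1 D) := by
    ext x; simp only [Finset.mem_range, Finset.mem_insert, Finset.mem_Icc]; omega
  rw [e, Finset.sum_insert (by simp)] at h
  simp only [Nat.add_zero, Nat.choose_zero_right] at h
  omega

lemma sum_reflect_choose (ℓ d : ℕ) :
    ∑ x ∈ Finset.range (d+1), (ℓ + (d - x)).choose ℓ = (ℓ + d + 1).choose (ℓ + 1) := by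
  have h := Finset.sum_range_reflect (fun j => (ℓ + (d - j)).choose ℓ) (d+1)
  rw [← h]
  have h3 : ∀ j ∈ Finset.range (d+1), (ℓ + (d - (d + 1 - 1 - j))).choose ℓ = (ℓ + j).choose j := by
    intro j hj
    simp only [Finset.mem_range, Nat.lt_succ_iff] at hj
    rw [show d - (d + 1 - 1 - j) = j by omega]
    exact Nat.choose_symm_add
  rw [Finset.sum_congr rfl h3, hockey]

lemma card_Tset (ℓ d : ℕ) : (Tset ℓ d).card = (ℓ + d).choose ℓ := by
  induction ℓ generalizing d with
  | zero =>
    rw [Nat.choose_zero_right]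
    have : Tset 0 d = {fun i => 0} := by
      ext β
      simp only [mem_Tset, Finset.mem_singleton]
      constructor
      · intro _; exact funext fun i => i.elim0
      · intro h; rw [h]; simp
    simp [this]
  | succ ℓ ih =>
    have h := card_filter_cons ℓ d (fun _ => True)
    simp only [Finset.filter_true] at h
    rw [h]
    have h2 : ∀ b ∈ Finset.range (d+1), ((Tset ℓ (d-b)).card) = (ℓ + (d - b)).choose ℓ :=
      fun b _ => ih (d-b)
    rw [Finset.sum_congr rfl h2, sum_reflect_choose, show ℓ + 1 + d = ℓ + d + 1 by ring]


def Mdef : (ℓ : ℕ) → (d : ℕ) → (Fin ℓ → ℕ) → ℕ → ℤ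
  | 0, _, _, _ => -1
  | (ℓ+1), d, α, a => if d - α 0 < a then (ℓ : ℤ) else Mdef ℓ (d - α 0) (Fin.tail α) a

lemma Mdef_le (ℓ : ℕ) : ∀ (d : ℕ) (α : Fin ℓ → ℕ) (a : ℕ), Mdef ℓ d α a ≤ (ℓ : ℤ) - 1 := by
  induction ℓ with
  | zero => intro d α a; simp [Mdef]
  | succ ℓ ih =>
    intro d α a
    rw [Mdef]
    split
    · push_cast; omega
    · have := ih (d - α 0) (Fin.tail α) a
      push_cast
      omega

lemma Mdef_ge (ℓ : ℕ) : ∀ (d : ℕ) (α : Fin ℓ → ℕ) (a : ℕ), -1 ≤ Mdef ℓ d α a := by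
  induction ℓ with
  | zero => intro d α a; simp [Mdef]
  | succ ℓ ih =>
    intro d α a
    rw [Mdef]
    split
    · omega
    · exact ih _ _ _

lemma Mdef_mono (ℓ : ℕ) : ∀ (d : ℕ) (α : Fin ℓ → ℕ) (a b : ℕ), a ≤ b →
    Mdef ℓ d α a ≤ Mdef ℓ d α b := by
  induction ℓ with
  | zero => intro d α a b _; simp [Mdef]
  | succ ℓ ih =>
    intro d α a b hab
    rw [Mdef, Mdef]
    rcases lt_or_ge (d - α 0) a with h | h
    · rw [if_pos h, if_pos (lt_of_lt_of_le h hab)]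
    · rw [if_neg (not_lt.mpr h)]
      rcases lt_or_ge (d - α 0) b with h2 | h2
      · rw [if_pos h2]
        have := Mdef_le ℓ (d - α 0) (Fin.tail α) a
        omega
      · rw [if_neg (not_lt.mpr h2)]
        exact ih _ _ _ _ hab

lemma upper_sum_eq (ℓ d c : ℕ) (hcd : c ≤ d) :
    ∑ a ∈ Finset.Icc (d-c+1) d, (ℓ + a).choose a
      = ∑ b ∈ Finset.range c, (ℓ + (d - b)).choose ℓ := by
  refine Finset.sum_nbij' (fun a => d - a) (fun b => d - b) ?_ ?_ ?_ ?_ ?_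
  · intro a ha
    simp only [Finset.mem_Icc] at ha
    simp only [Finset.mem_range]
    omega
  · intro b hb
    simp only [Finset.mem_range] at hb
    simp only [Finset.mem_Icc]
    omega
  · intro a ha
    simp only [Finset.mem_Icc] at ha
    show d - (d - a) = a
    omega
  · intro b hb
    simp only [Finset.mem_range] at hb
    show d - (d - b) = b
    omega
  · intro a ha
    simp only [Finset.mem_Icc] at ha
    rw [show d - (d - a) = a by omega]
    exact Nat.choose_symm_add.symm


lemma sum_Icc_split (d c : ℕ) (hcd : c ≤ d) (f : ℕ → ℕ) :
    ∑ a ∈ Finset.Icc 1 d, f a = ∑ a ∈ Finset.Icc 1 (d-c), f a + ∑ a ∈ Finset.Icc (d-c+1) d, f a := by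
  rw [← Finset.sum_union]
  · congr 1
    ext x
    simp only [Finset.mem_Icc, Finset.mem_union]
    omega
  · rw [Finset.disjoint_left]
    intro x hx hy
    simp only [Finset.mem_Icc] at hx hy
    omega

lemma sumM_eq_cnt (ℓ : ℕ) : ∀ (d : ℕ) (α : Fin ℓ → ℕ), (∑ i, α i ≤ d) →
    ∑ a ∈ Finset.Icc 1 d, ((Mdef ℓ d α a + a).toNat).choose a
      = ((Tset ℓ d).filter fun β => toLex β < toLex α).card := by
  induction ℓ with
  | zero =>
    intro d α _
    have h1 : ((Tset 0 d).filter fun β => toLex β < toLex α) = ∅ := by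
      rw [Finset.filter_eq_empty_iff]
      intro β _
      rw [Subsingleton.elim β α]
      exact lt_irrefl _
    rw [h1]
    simp only [Finset.card_empty]
    apply Finset.sum_eq_zero
    intro a ha
    simp only [Finset.mem_Icc] at ha
    rw [Mdef]
    apply Nat.choose_eq_zero_of_lt
    omega
  | succ ℓ ih =>
    intro d α hα
    have hcd : α 0 ≤ d := le_trans (Finset.single_le_sum (fun _ _ => Nat.zero_le _) (Finset.mem_univ 0)) hα
    have hsum : ∑ i, α i = α 0 + ∑ i : Fin ℓ, α i.succ := Fin.sum_univ_succ α
    have h1 : ∑ i, Fin.tail α i = ∑ i : Fin ℓ, α i.succ := rfl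
    have htail : ∑ i, Fin.tail α i ≤ d - α 0 := by omega
    -- RHS
    rw [card_filter_cons ℓ d (fun β => toLex β < toLex α)]
    have hsplit : ∀ b ∈ Finset.range (d+1),
        ((Tset ℓ (d-b)).filter fun t => toLex (Fin.cons b t) < toLex α).card
        = if b < α 0 then (ℓ + (d-b)).choose ℓ
          else if b = α 0 then ((Tset ℓ (d - α 0)).filter fun t => toLex t < toLex (Fin.tail α)).card
          else 0 := by
      intro b _
      have hpred : ∀ t : Fin ℓ → ℕ, (toLex (Fin.cons b t) < toLex α
          ↔ (b < α 0 ∨ (b = α 0 ∧ toLex t < toLex (Fin.tail α)))) := by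
        intro t
        rw [lex_lt_succ_iff]
        simp [Fin.cons_zero, Fin.tail_cons]
      rcases lt_trichotomy b (α 0) with h | h | h
      · rw [if_pos h]
        rw [Finset.filter_true_of_mem (fun t _ => (hpred t).mpr (Or.inl h)), card_Tset]
      · rw [if_neg (by omega), if_pos h]
        subst h
        congr 1
        apply Finset.filter_congr
        intro t _
        rw [hpred t]
        simp
      · rw [if_neg (by omega), if_neg (by omega)]
        rw [Finset.card_eq_zero, Finset.filter_eq_empty_iff]
        intro t _
        rw [hpred t]
        push_neg
        omega
    rw [Finset.sum_congr rfl hsplit]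
    rw [Finset.range_eq_Ico, ← Finset.sum_Ico_consecutive _ (Nat.zero_le (α 0)) (by omega : α 0 ≤ d + 1)]
    have hA : ∑ b ∈ Finset.Ico 0 (α 0), (if b < α 0 then (ℓ + (d-b)).choose ℓ
          else if b = α 0 then ((Tset ℓ (d - α 0)).filter fun t => toLex t < toLex (Fin.tail α)).card
          else 0) = ∑ b ∈ Finset.range (α 0), (ℓ + (d-b)).choose ℓ := by
      rw [← Finset.range_eq_Ico]
      apply Finset.sum_congr rfl
      intro b hb
      rw [if_pos (Finset.mem_range.mp hb)]
    have hB : ∑ b ∈ Finset.Ico (α 0) (d+1), (if b < α 0 then (ℓ + (d-b)).choose ℓ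
          else if b = α 0 then ((Tset ℓ (d - α 0)).filter fun t => toLex t < toLex (Fin.tail α)).card
          else 0) = ((Tset ℓ (d - α 0)).filter fun t => toLex t < toLex (Fin.tail α)).card := by
      rw [Finset.sum_eq_single_of_mem (α 0) (by simp only [Finset.mem_Ico]; omega)]
      · rw [if_neg (lt_irrefl _), if_pos rfl]
      · intro b hb hne
        simp only [Finset.mem_Ico] at hb
        rw [if_neg (by omega), if_neg hne]
    rw [hA, hB]
    -- LHS
    rw [sum_Icc_split d (α 0) hcd]
    have hlow : ∑ a ∈ Finset.Icc 1 (d - α 0), ((Mdef (ℓ+1) d α a + a).toNat).choose a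
        = ((Tset ℓ (d - α 0)).filter fun t => toLex t < toLex (Fin.tail α)).card := by
      rw [← ih (d - α 0) (Fin.tail α) htail]
      apply Finset.sum_congr rfl
      intro a ha
      simp only [Finset.mem_Icc] at ha
      rw [Mdef, if_neg (by omega)]
    have hup : ∑ a ∈ Finset.Icc (d - α 0 + 1) d, ((Mdef (ℓ+1) d α a + a).toNat).choose a
        = ∑ b ∈ Finset.range (α 0), (ℓ + (d-b)).choose ℓ := by
      rw [← upper_sum_eq ℓ d (α 0) hcd]
      apply Finset.sum_congr rfl
      intro a ha
      simp only [Finset.mem_Icc] at ha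
      rw [Mdef, if_pos (by omega)]
      congr 1
    rw [hlow, hup]
    ring


lemma sum_qfl_Mdef (q ℓ : ℕ) : ∀ (d : ℕ) (α : Fin ℓ → ℕ), (∑ i, α i ≤ d) →
    ∑ a ∈ Finset.Icc 1 d, qfl q (Mdef ℓ d α a) = ∑ i : Fin ℓ, α i * q ^ (ℓ - 1 - (i : ℕ)) := by
  induction ℓ with
  | zero =>
    intro d α _
    simp [Mdef, qfl]
  | succ ℓ ih =>
    intro d α hα
    have hcd : α 0 ≤ d := le_trans (Finset.single_le_sum (fun _ _ => Nat.zero_le _) (Finset.mem_univ 0)) hα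
    have hsum : ∑ i, α i = α 0 + ∑ i : Fin ℓ, α i.succ := Fin.sum_univ_succ α
    have h1 : ∑ i, Fin.tail α i = ∑ i : Fin ℓ, α i.succ := rfl
    have htail : ∑ i, Fin.tail α i ≤ d - α 0 := by omega
    rw [sum_Icc_split d (α 0) hcd]
    have hlow : ∑ a ∈ Finset.Icc 1 (d - α 0), qfl q (Mdef (ℓ+1) d α a)
        = ∑ i : Fin ℓ, Fin.tail α i * q ^ (ℓ - 1 - (i : ℕ)) := by
      rw [← ih (d - α 0) (Fin.tail α) htail]
      apply Finset.sum_congr rfl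
      intro a ha
      simp only [Finset.mem_Icc] at ha
      rw [Mdef, if_neg (by omega)]
    have hup : ∑ a ∈ Finset.Icc (d - α 0 + 1) d, qfl q (Mdef (ℓ+1) d α a)
        = α 0 * q ^ ℓ := by
      have he : ∀ a ∈ Finset.Icc (d - α 0 + 1) d, qfl q (Mdef (ℓ+1) d α a) = q ^ ℓ := by
        intro a ha
        simp only [Finset.mem_Icc] at ha
        rw [Mdef, if_pos (by omega), qfl]
        rw [if_pos (by positivity)]
        simp
      rw [Finset.sum_congr rfl he, Finset.sum_const, Nat.card_Icc]
      have : d + 1 - (d - α 0 + 1) = α 0 := by omega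
      rw [this, smul_eq_mul]
    rw [hlow, hup, Fin.sum_univ_succ]
    have hexp : ∀ i : Fin ℓ, α i.succ * q ^ (ℓ + 1 - 1 - ((i.succ : ℕ))) = Fin.tail α i * q ^ (ℓ - 1 - (i : ℕ)) := by
      intro i
      have : ℓ + 1 - 1 - ((i : ℕ) + 1) = ℓ - 1 - (i : ℕ) := by omega
      rw [Fin.val_succ, this]
      rfl
    rw [Finset.sum_congr rfl (fun i _ => hexp i)]
    simp only [Fin.val_zero, Nat.sub_zero, Nat.add_sub_cancel]
    ring

lemma chain_of_succ (d : ℕ) (M : ℕ → ℤ) (h : ∀ a ∈ Finset.Ico 1 d, M a ≤ M (a+1)) :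
    ∀ a b, a ∈ Finset.Icc 1 d → b ∈ Finset.Icc 1 d → a ≤ b → M a ≤ M b := by
  intro a b ha hb hab
  simp only [Finset.mem_Icc] at ha hb
  obtain ⟨ha1, had⟩ := ha
  obtain ⟨hb1, hbd⟩ := hb
  clear hb1
  induction b, hab using Nat.le_induction with
  | base => exact le_refl _
  | succ b hab ihb =>
    refine le_trans (ihb (by omega)) (h b ?_)
    simp only [Finset.mem_Ico]
    omega

lemma macaulay_unique : ∀ (d : ℕ) (M M' : ℕ → ℤ),
    (∀ a b, a ∈ Finset.Icc 1 d → b ∈ Finset.Icc 1 d → a ≤ b → M a ≤ M b) →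
    (∀ a ∈ Finset.Icc 1 d, -1 ≤ M a) →
    (∀ a b, a ∈ Finset.Icc 1 d → b ∈ Finset.Icc 1 d → a ≤ b → M' a ≤ M' b) →
    (∀ a ∈ Finset.Icc 1 d, -1 ≤ M' a) →
    (∑ a ∈ Finset.Icc 1 d, ((M a + a).toNat).choose a
      = ∑ a ∈ Finset.Icc 1 d, ((M' a + a).toNat).choose a) →
    ∀ a ∈ Finset.Icc 1 d, M a = M' a := by
  have key : ∀ (d : ℕ) (M M' : ℕ → ℤ),
      (∀ a b, a ∈ Finset.Icc 1 (d+1) → b ∈ Finset.Icc 1 (d+1) → a ≤ b → M a ≤ M b) →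
      (∀ a ∈ Finset.Icc 1 (d+1), -1 ≤ M a) →
      (∀ a ∈ Finset.Icc 1 (d+1), -1 ≤ M' a) →
      M (d+1) < M' (d+1) →
      ∑ a ∈ Finset.Icc 1 (d+1), ((M a + a).toNat).choose a
        < ∑ a ∈ Finset.Icc 1 (d+1), ((M' a + a).toNat).choose a := by
    intro d M M' hM hMg hM'g hlt
    have hdm : d + 1 ∈ Finset.Icc 1 (d+1) := by simp
    have hRHS : ((M' (d+1) + (d+1)).toNat).choose (d+1)
        ≤ ∑ a ∈ Finset.Icc 1 (d+1), ((M' a + a).toNat).choose a :=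
      Finset.single_le_sum (f := fun a => ((M' a + (a:ℤ)).toNat).choose a)
        (fun _ _ => Nat.zero_le _) hdm
    rcases eq_or_lt_of_le (hMg (d+1) hdm) with hm1 | hpos
    · -- M (d+1) = -1, all M a = -1
      have hall : ∀ a ∈ Finset.Icc 1 (d+1), ((M a + a).toNat).choose a = 0 := by
        intro a ha
        have h1 := hM a (d+1) ha hdm (by simp only [Finset.mem_Icc] at ha; omega)
        have h2 := hMg a ha
        have : M a = -1 := by omega
        rw [this]
        apply Nat.choose_eq_zero_of_lt
        simp only [Finset.mem_Icc] at ha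
        omega
      rw [Finset.sum_eq_zero hall]
      have : 1 ≤ ((M' (d+1) + (d+1)).toNat).choose (d+1) := by
        have : d + 1 ≤ (M' (d+1) + (d+1)).toNat := by omega
        calc 1 = (d+1).choose (d+1) := by simp
        _ ≤ _ := Nat.choose_le_choose _ this
      omega
    · -- M (d+1) ≥ 0
      set K := (M (d+1)).toNat with hK
      have hKM : (K : ℤ) = M (d+1) := Int.toNat_of_nonneg (by omega)
      have hLHS : ∑ a ∈ Finset.Icc 1 (d+1), ((M a + a).toNat).choose a
          ≤ ∑ a ∈ Finset.Icc 1 (d+1), (K + a).choose a := by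
        apply Finset.sum_le_sum
        intro a ha
        apply Nat.choose_le_choose
        have := hM a (d+1) ha hdm (by simp only [Finset.mem_Icc] at ha; omega)
        omega
      rw [hockey_Icc K (d+1)] at hLHS
      have hsym : (K + (d+1) + 1).choose (K+1) = (K + (d+1) + 1).choose (d+1) :=
        Nat.choose_symm_of_eq_add (by ring)
      have hpos2 : 0 < (K + (d+1) + 1).choose (d+1) := Nat.choose_pos (by omega)
      have hbig : (K + (d+1) + 1).choose (d+1) ≤ ((M' (d+1) + (d+1)).toNat).choose (d+1) := by
        apply Nat.choose_le_choose
        omega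
      omega
  intro d
  induction d with
  | zero => intro M M' _ _ _ _ _ a ha; simp at ha
  | succ d ih =>
    intro M M' hM hMg hM' hM'g hsum
    have htop : M (d+1) = M' (d+1) := by
      by_contra hne
      rcases lt_or_gt_of_ne hne with hlt | hgt
      · exact absurd hsum (Nat.ne_of_lt (key d M M' hM hMg hM'g hlt))
      · exact absurd hsum.symm (Nat.ne_of_lt (key d M' M hM' hM'g hMg hgt))
    have hdm : d + 1 ∈ Finset.Icc 1 (d+1) := by simp
    have hsplit : ∀ N : ℕ → ℤ, ∑ a ∈ Finset.Icc 1 (d+1), ((N a + a).toNat).choose a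
        = ∑ a ∈ Finset.Icc 1 d, ((N a + a).toNat).choose a + ((N (d+1) + (d+1)).toNat).choose (d+1) := by
      intro N
      rw [← Finset.Ico_add_one_right_eq_Icc, Finset.sum_Ico_succ_top (by omega), Finset.Ico_add_one_right_eq_Icc]
      push_cast
      ring_nf
    rw [hsplit M, hsplit M'] at hsum
    rw [htop] at hsum
    have hsum' : ∑ a ∈ Finset.Icc 1 d, ((M a + a).toNat).choose a
        = ∑ a ∈ Finset.Icc 1 d, ((M' a + a).toNat).choose a := by omega
    have hsub : ∀ x, x ∈ Finset.Icc 1 d → x ∈ Finset.Icc 1 (d+1) := by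
      intro x hx; simp only [Finset.mem_Icc] at hx ⊢; omega
    have hres := ih M M'
      (fun a b ha hb hab => hM a b (hsub a ha) (hsub b hb) hab)
      (fun a ha => hMg a (hsub a ha))
      (fun a b ha hb hab => hM' a b (hsub a ha) (hsub b hb) hab)
      (fun a ha => hM'g a (hsub a ha))
      hsum'
    intro a ha
    simp only [Finset.mem_Icc] at ha
    rcases Nat.lt_or_ge a (d+1) with h2 | h2
    · exact hres a (by simp only [Finset.mem_Icc]; omega)
    · have : a = d + 1 := by omega
      rw [this, htop]

end S14

/-- if `(m_d, …, m_1)` is the Macaulay `d`-tuple corresponding to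
`C(m+d, d) - r`, then `H_r(d, m) = Σ_{a=1}^{d} ⌊q^{m_a}⌋`. -/
theorem statement_14 (q m d r : ℕ) (hq : IsPrimePow q) (hm : 0 < m)
    (hd1 : 1 ≤ d) (hdq : d < q) (hr : r ≤ (m+d).choose d)
    (M : ℕ → ℤ)
    (hmono : ∀ a ∈ Finset.Ico 1 d, M a ≤ M (a+1))
    (hge : ∀ a ∈ Finset.Icc 1 d, -1 ≤ M a)
    (hrep : ((m+d).choose d - r : ℕ) = ∑ a ∈ Finset.Icc 1 d, ((M a + a).toNat).choose a)
    (H : ℕ) (hH : IsHr q d m r H) :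
    H = ∑ a ∈ Finset.Icc 1 d, qfl q (M a) := by
  classical
  have hq1 : 1 ≤ q := hq.pos
  have hdmem : d ∈ Finset.Icc 1 d := by simp [hd1]
  have hMchain := S14.chain_of_succ d M hmono
  rcases hH with ⟨hr0, hH0⟩ | ⟨hrpos, α, hαmem, hrank, hHval⟩
  · -- r = 0
    subst hr0
    rw [Nat.sub_zero] at hrep
    set M'' : ℕ → ℤ := fun a => if a = d then (m : ℤ) else -1 with hM''
    have hsum'' : ∑ a ∈ Finset.Icc 1 d, ((M'' a + a).toNat).choose a = (m+d).choose d := by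
      rw [Finset.sum_eq_single_of_mem d hdmem]
      · simp only [hM'', if_pos rfl]
        rw [show ((m : ℤ) + (d : ℕ)).toNat = m + d by omega]
      · intro a ha hne
        simp only [hM'', if_neg hne]
        apply Nat.choose_eq_zero_of_lt
        simp only [Finset.mem_Icc] at ha
        omega
    have hchain'' : ∀ a b, a ∈ Finset.Icc 1 d → b ∈ Finset.Icc 1 d → a ≤ b → M'' a ≤ M'' b := by
      intro a b ha hb hab
      simp only [Finset.mem_Icc] at ha hb
      simp only [hM'']
      split <;> split <;> omega
    have hge'' : ∀ a ∈ Finset.Icc 1 d, -1 ≤ M'' a := by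
      intro a _
      simp only [hM'']
      split <;> omega
    have heq := S14.macaulay_unique d M M'' hMchain hge hchain'' hge''
      (by rw [hsum'', ← hrep])
    have : ∑ a ∈ Finset.Icc 1 d, qfl q (M a) = ∑ a ∈ Finset.Icc 1 d, qfl q (M'' a) :=
      Finset.sum_congr rfl fun a ha => by rw [heq a ha]
    rw [this, Finset.sum_eq_single_of_mem d hdmem]
    · simp only [hM'', if_pos rfl, qfl, if_pos (by positivity : (0:ℤ) ≤ (m:ℤ))]
      rw [hH0, Int.toNat_natCast]
    · intro a _ hne
      simp only [hM'', if_neg hne, qfl]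
      norm_num
  · -- r > 0
    have hHc : HcubeLe q m d = ↑(S14.Tset m d) := by
      ext β
      simp only [HcubeLe, Hcube, Set.mem_setOf_eq, Finset.mem_coe, S14.mem_Tset]
      constructor
      · exact fun h => h.2
      · intro h
        refine ⟨fun j => ?_, h⟩
        have : β j ≤ ∑ i, β i :=
          Finset.single_le_sum (fun _ _ => Nat.zero_le _) (Finset.mem_univ j)
        omega
    rw [hHc] at hαmem hrank
    have hαsum : ∑ i, α i ≤ d := S14.mem_Tset.mp (Finset.mem_coe.mp hαmem)
    have hrank' : ((S14.Tset m d).filter fun β => toLex α ≤ toLex β).card = r := by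
      rw [← hrank]
      have : {β ∈ (↑(S14.Tset m d) : Set (Fin m → ℕ)) | toLex α ≤ toLex β}
          = ↑((S14.Tset m d).filter fun β => toLex α ≤ toLex β) := by
        ext β
        simp
      rw [this, Set.ncard_coe_finset]
    have hcnt : ((S14.Tset m d).filter fun β => toLex β < toLex α).card
        = (m+d).choose d - r := by
      have hsplit := Finset.card_filter_add_card_filter_not
        (s := S14.Tset m d) (p := fun β => toLex α ≤ toLex β)
      have hneg : ((S14.Tset m d).filter fun β => ¬ toLex α ≤ toLex β)
          = ((S14.Tset m d).filter fun β => toLex β < toLex α) := by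
        apply Finset.filter_congr
        intro β _
        exact S14.lex_not_le_iff _ _
      rw [hrank', hneg, S14.card_Tset] at hsplit
      have hchoose : (m + d).choose m = (m + d).choose d := Nat.choose_symm_add
      omega
    have hsumM := S14.sumM_eq_cnt m d α hαsum
    rw [hcnt] at hsumM
    have hMdchain : ∀ a b, a ∈ Finset.Icc 1 d → b ∈ Finset.Icc 1 d → a ≤ b →
        S14.Mdef m d α a ≤ S14.Mdef m d α b := fun a b _ _ hab => S14.Mdef_mono m d α a b hab
    have hMdge : ∀ a ∈ Finset.Icc 1 d, -1 ≤ S14.Mdef m d α a := fun a _ => S14.Mdef_ge m d α a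
    have heq := S14.macaulay_unique d M (S14.Mdef m d α) hMchain hge hMdchain hMdge
      (by rw [← hrep, hsumM])
    have h1 : ∑ a ∈ Finset.Icc 1 d, qfl q (M a)
        = ∑ a ∈ Finset.Icc 1 d, qfl q (S14.Mdef m d α a) :=
      Finset.sum_congr rfl fun a ha => by rw [heq a ha]
    rw [h1, S14.sum_qfl_Mdef q m d α hαsum, hHval]
end

section
/- Let q be a prime power, m a positive integer, and d, r integers with 1 ≤ d ≤ q and 1 ≤ r ≤ C(m+d, d). Let i, j be determined from r as in the standard decomposition, and let (m_d, ..., m_1) be the Macaulay d-tuple corresponding to C(m+d, d) − r. Then H_j(d−1, m−i) + p_{m−i−1} = p_{m_d} + Σ_{a=1}^{d−1} ⌊q^{m_a}⌋, where ⌊q^{m_a}⌋ means q^{m_a} if m_a ≥ 0 and 0 if m_a = −1. -/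
open scoped Classical

namespace St15

def g : (n : ℕ) → (Fin n → ℕ) → ℕ → ℕ → ℤ
  | 0, _, _, _ => -1
  | (n+1), α, e, a => if e - α 0 < a ∧ a ≤ e then (n : ℤ) else g n (Fin.tail α) (e - α 0) a

lemma g_ge (n : ℕ) : ∀ (α : Fin n → ℕ) e a, -1 ≤ g n α e a := by
  induction n with
  | zero => intro α e a; simp [g]
  | succ n ih =>
    intro α e a
    rw [g]
    split
    · omega
    · exact ih _ _ _

lemma g_le (n : ℕ) : ∀ (α : Fin n → ℕ) e a, g n α e a ≤ (n : ℤ) - 1 := by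
  induction n with
  | zero => intro α e a; simp [g]
  | succ n ih =>
    intro α e a
    rw [g]
    split
    · push_cast; omega
    · have := ih (Fin.tail α) (e - α 0) a
      push_cast
      omega

lemma g_mono (n : ℕ) : ∀ (α : Fin n → ℕ) e a a', a ≤ a' → a' ≤ e →
    g n α e a ≤ g n α e a' := by
  induction n with
  | zero => intro _ _ _ _ _ _; simp [g]
  | succ n ih =>
    intro α e a a' haa hae
    rw [g, g]
    split_ifs with h1 h2 h2
    · exact le_refl _
    · omega
    · have := g_le n (Fin.tail α) (e - α 0) a
      omega
    · exact ih _ _ _ _ haa (by omega)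

lemma qfl_neg_one (q : ℕ) : qfl q (-1) = 0 := by simp [qfl]

lemma qfl_nat (q : ℕ) (n : ℕ) : qfl q (n : ℤ) = q ^ n := by simp [qfl]

/-- the sum of `qfl` over the constructed Macaulay entries -/
lemma g_qfl_sum (q : ℕ) (n : ℕ) : ∀ (e : ℕ) (α : Fin n → ℕ), (∑ i, α i ≤ e) →
    ∑ a ∈ Finset.Ioc 0 e, qfl q (g n α e a) = ∑ k : Fin n, α k * q ^ (n - 1 - (k : ℕ)) := by
  induction n with
  | zero =>
    intro e α _
    simp [g, qfl]
  | succ n ih =>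
    intro e α hα
    have hα0 : α 0 ≤ e := by
      have : α 0 ≤ ∑ i, α i :=
        Finset.single_le_sum (fun j _ => Nat.zero_le (α j)) (Finset.mem_univ 0)
      omega
    set b := e - α 0 with hb
    have hsplit : ∑ a ∈ Finset.Ioc 0 b, qfl q (g (n+1) α e a)
        + ∑ a ∈ Finset.Ioc b e, qfl q (g (n+1) α e a)
        = ∑ a ∈ Finset.Ioc 0 e, qfl q (g (n+1) α e a) :=
      Finset.sum_Ioc_consecutive _ (Nat.zero_le b) (by omega)
    have h1 : ∑ a ∈ Finset.Ioc 0 b, qfl q (g (n+1) α e a)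
        = ∑ a ∈ Finset.Ioc 0 b, qfl q (g n (Fin.tail α) b a) := by
      apply Finset.sum_congr rfl
      intro a ha
      rw [Finset.mem_Ioc] at ha
      rw [g, if_neg (by omega)]
    have h2 : ∑ a ∈ Finset.Ioc b e, qfl q (g (n+1) α e a) = α 0 * q ^ n := by
      rw [Finset.sum_congr rfl (fun a ha => ?_), Finset.sum_const, Nat.card_Ioc]
      · rw [show e - b = α 0 by omega, smul_eq_mul]
      · rw [Finset.mem_Ioc] at ha
        rw [g, if_pos ⟨ha.1, ha.2⟩, qfl_nat]
    have htail : ∑ i, Fin.tail α i ≤ b := by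
      have := Fin.sum_univ_succ α
      simp only [Fin.tail] at *
      omega
    rw [← hsplit, h1, h2, ih b (Fin.tail α) htail, Fin.sum_univ_succ, add_comm]
    have hre : ∑ x : Fin n, α x.succ * q ^ (n + 1 - 1 - ((x.succ : Fin (n+1)) : ℕ))
        = ∑ k : Fin n, Fin.tail α k * q ^ (n - 1 - (k : ℕ)) := by
      apply Finset.sum_congr rfl
      intro k _
      have hk : n + 1 - 1 - ((k.succ : Fin (n+1)) : ℕ) = n - 1 - (k : ℕ) := by
        simp only [Fin.val_succ]
        omega
      rw [hk]
      rfl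
    rw [hre]
    simp

/-- hockey stick -/
lemma hockey (n : ℕ) : ∀ X, ∑ a ∈ Finset.range (X+1), (n + a).choose a = (n + 1 + X).choose (n+1) := by
  intro X
  induction X with
  | zero => simp
  | succ X ih =>
    rw [Finset.sum_range_succ, ih]
    have h3 : (n + (X+1)).choose (X+1) = (n+1+X).choose n := by
      rw [show n + (X+1) = n+1+X by ring, ← Nat.choose_symm (show n ≤ n+1+X by omega)]
      congr 1
      omega
    rw [h3, show n+1+(X+1) = (n+1+X)+1 by ring, Nat.choose_succ_succ (n+1+X) n]
    simp only [Nat.succ_eq_add_one]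
    omega

lemma hockey_Ioc (n X : ℕ) :
    ∑ a ∈ Finset.Ioc 0 X, (n + a).choose a + 1 = (n + 1 + X).choose (n+1) := by
  rw [← hockey n X]
  rw [Finset.range_eq_Ico, show Finset.Ico 0 (X+1) = Finset.Icc 0 X by rfl,
    ← Finset.Ioc_insert_left (Nat.zero_le X), Finset.sum_insert (by simp)]
  simp [add_comm]

/-- lt on lex of Fin pi types decomposes via cons -/
lemma lex_lt_cons {n : ℕ} {x y : ℕ} {s t : Fin n → ℕ} :
    toLex (Fin.cons x s : Fin (n+1) → ℕ) < toLex (Fin.cons y t) ↔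
      x < y ∨ (x = y ∧ toLex s < toLex t) := by
  constructor
  · rintro ⟨i, h, hlt⟩
    induction i using Fin.cases with
    | zero => exact Or.inl hlt
    | succ k =>
      refine Or.inr ⟨h 0 (Fin.succ_pos k), ⟨k, fun j hj => ?_, hlt⟩⟩
      have := h j.succ (by simpa using hj)
      simpa using this
  · rintro (h | ⟨rfl, ⟨k, h, hlt⟩⟩)
    · exact ⟨0, fun j hj => absurd hj (Fin.not_lt_zero j), h⟩
    · refine ⟨k.succ, fun j hj => ?_, hlt⟩
      induction j using Fin.cases with
      | zero => rfl
      | succ l => simpa using h l (by simpa using hj)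

lemma lex_le_cons {n : ℕ} {x y : ℕ} {s t : Fin n → ℕ} :
    toLex (Fin.cons x s : Fin (n+1) → ℕ) ≤ toLex (Fin.cons y t) ↔
      x < y ∨ (x = y ∧ toLex s ≤ toLex t) := by
  rw [le_iff_lt_or_eq, le_iff_lt_or_eq]
  refine (or_congr lex_lt_cons Iff.rfl).trans ?_
  rw [toLex_inj, toLex_inj,
    Fin.cons_inj]
  tauto

def Smp (n X : ℕ) : Set (Fin n → ℕ) := {β | ∑ i, β i ≤ X}

lemma mem_smp {n X : ℕ} {β : Fin n → ℕ} : β ∈ Smp n X ↔ ∑ i, β i ≤ X := Iff.rfl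

lemma smp_finite (n X : ℕ) : (Smp n X).Finite := by
  apply Set.Finite.subset (Set.finite_Icc (0 : Fin n → ℕ) (fun _ => X))
  intro β hβ
  refine ⟨fun i => Nat.zero_le _, fun i => ?_⟩
  exact le_trans (Finset.single_le_sum (fun j _ => Nat.zero_le (β j)) (Finset.mem_univ i)) hβ

lemma sum_cons {n : ℕ} (c : ℕ) (β : Fin n → ℕ) :
    ∑ i, (Fin.cons c β : Fin (n+1) → ℕ) i = c + ∑ i, β i := by
  rw [Fin.sum_univ_succ]; simp

/-- the subset of `Smp (n+1) X` with first coordinate `c` -/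
lemma cons_image {n X c : ℕ} (hc : c ≤ X) :
    (Fin.cons c '' Smp n (X - c) : Set (Fin (n+1) → ℕ)) = {β ∈ Smp (n+1) X | β 0 = c} := by
  ext β
  constructor
  · rintro ⟨β', hβ', rfl⟩
    refine ⟨?_, by simp⟩
    rw [mem_smp] at hβ'
    rw [mem_smp, sum_cons]
    omega
  · rintro ⟨hβ, h0⟩
    refine ⟨Fin.tail β, ?_, by rw [← h0, Fin.cons_self_tail]⟩
    rw [mem_smp] at hβ ⊢
    have := sum_cons (β 0) (Fin.tail β)
    rw [Fin.cons_self_tail] at this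
    omega

/-- the subset with first coordinate `> c` -/
lemma shift_image {n X c : ℕ} (hc : c < X) :
    ((fun β => Fin.cons (β 0 + (c+1)) (Fin.tail β)) '' Smp (n+1) (X - (c+1))
      : Set (Fin (n+1) → ℕ)) = {β ∈ Smp (n+1) X | c < β 0} := by
  ext β
  constructor
  · rintro ⟨γ, hγ, rfl⟩
    rw [mem_smp] at hγ
    have hs := sum_cons (γ 0) (Fin.tail γ)
    rw [Fin.cons_self_tail] at hs
    refine ⟨?_, by simp; omega⟩
    · rw [mem_smp, sum_cons]
      omega
  · rintro ⟨hβ, h0⟩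
    rw [mem_smp] at hβ
    have hs := sum_cons (β 0) (Fin.tail β)
    rw [Fin.cons_self_tail] at hs
    refine ⟨Fin.cons (β 0 - (c+1)) (Fin.tail β), ?_, ?_⟩
    · rw [mem_smp, sum_cons]; omega
    · simp only [Fin.cons_zero, Fin.tail_cons]
      rw [show β 0 - (c+1) + (c+1) = β 0 by omega, Fin.cons_self_tail]

lemma shift_inj {n c : ℕ} :
    Function.Injective (fun β : Fin (n+1) → ℕ => Fin.cons (β 0 + c) (Fin.tail β)
      : (Fin (n+1) → ℕ) → (Fin (n+1) → ℕ)) := by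
  intro β γ h
  simp only [Fin.cons_inj] at h
  have h0 : β 0 = γ 0 := by omega
  rw [← Fin.cons_self_tail (q := β), ← Fin.cons_self_tail (q := γ), h0, h.2]

lemma ncard_smp (n : ℕ) : ∀ X, (Smp n X).ncard = (n + X).choose n := by
  induction n with
  | zero =>
    intro X
    have : Smp 0 X = Set.univ := by
      ext β; simp [mem_smp]
    rw [this, Set.ncard_univ]
    simp [Nat.card_eq_fintype_card]
  | succ n ih =>
    intro X
    induction X with
    | zero =>
      have : Smp (n+1) 0 = {0} := by
        ext β
        simp only [mem_smp, Nat.le_zero, Finset.sum_eq_zero_iff, Set.mem_singleton_iff,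
          Finset.mem_univ, true_implies]
        constructor
        · intro h; funext i; exact h i
        · intro h i; rw [h]; rfl
      rw [this, Set.ncard_singleton]
      simp
    | succ X ihX =>
      have hsplit : Smp (n+1) (X+1) =
          {β ∈ Smp (n+1) (X+1) | β 0 = 0} ∪ {β ∈ Smp (n+1) (X+1) | 0 < β 0} := by
        ext β; simp only [Set.mem_union, Set.mem_setOf_eq]
        constructor
        · intro h; rcases Nat.eq_zero_or_pos (β 0) with h0 | h0
          exacts [Or.inl ⟨h, h0⟩, Or.inr ⟨h, h0⟩]
        · rintro (⟨h, _⟩ | ⟨h, _⟩) <;> exact h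
      have hdisj : Disjoint {β ∈ Smp (n+1) (X+1) | β 0 = 0} {β ∈ Smp (n+1) (X+1) | 0 < β 0} := by
        rw [Set.disjoint_left]; rintro β ⟨_, h0⟩ ⟨_, h1⟩; omega
      have hfin1 : {β ∈ Smp (n+1) (X+1) | β 0 = 0}.Finite :=
        (smp_finite _ _).subset (fun β hβ => hβ.1)
      have hfin2 : {β ∈ Smp (n+1) (X+1) | 0 < β 0}.Finite :=
        (smp_finite _ _).subset (fun β hβ => hβ.1)
      rw [hsplit, Set.ncard_union_eq hdisj hfin1 hfin2]
      have h1 : {β ∈ Smp (n+1) (X+1) | β 0 = 0}.ncard = (n + (X+1)).choose n := by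
        rw [← cons_image (Nat.zero_le _), Set.ncard_image_of_injective _
          (Fin.cons_right_injective 0), Nat.sub_zero, ih]
      have h2 : {β ∈ Smp (n+1) (X+1) | 0 < β 0}.ncard = (n + 1 + X).choose (n+1) := by
        rw [← shift_image (Nat.succ_pos X), Set.ncard_image_of_injective _ shift_inj]
        simpa using ihX
      rw [h1, h2]
      rw [show n + 1 + (X + 1) = (n + 1 + X) + 1 by ring, Nat.choose_succ_succ' (n+1+X) n]
      ring_nf

/-- count of elements of the simplex with first coordinate `> c` -/
lemma ncard_gt (n X c : ℕ) :
    {β ∈ Smp (n+1) X | c < β 0}.ncard = (n + (X - c)).choose (n+1) := by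
  rcases lt_or_ge c X with hc | hc
  · rw [← shift_image hc, Set.ncard_image_of_injective _ shift_inj, ncard_smp]
    congr 1
    omega
  · have he : {β ∈ Smp (n+1) X | c < β 0} = ∅ := by
      ext β
      simp only [Set.mem_setOf_eq, Set.mem_empty_iff_false, iff_false, not_and, not_lt]
      intro hβ
      rw [mem_smp] at hβ
      have : β 0 ≤ ∑ i, β i := Finset.single_le_sum (fun j _ => Nat.zero_le (β j)) (Finset.mem_univ 0)
      omega
    rw [he, Set.ncard_empty, show X - c = 0 by omega]
    exact (Nat.choose_eq_zero_of_lt (by omega)).symm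

lemma cons_inj {n : ℕ} (c : ℕ) :
    Function.Injective (fun β' : Fin n → ℕ => (Fin.cons c β' : Fin (n+1) → ℕ)) := by
  intro x y h
  have := congrArg Fin.tail h
  simpa [Fin.tail_cons] using this

lemma key (n : ℕ) : ∀ (e : ℕ) (α : Fin n → ℕ), (∑ i, α i ≤ e) →
    (∑ a ∈ Finset.Ioc 0 e, ((g n α e a + a).toNat).choose a)
      + ({β ∈ Smp n e | toLex α ≤ toLex β}).ncard = (n + e).choose n := by
  induction n with
  | zero =>
    intro e α _
    have hs : ∑ a ∈ Finset.Ioc 0 e, ((g 0 α e a + a).toNat).choose a = 0 := by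
      apply Finset.sum_eq_zero
      intro a ha
      rw [Finset.mem_Ioc] at ha
      have : g 0 α e a = -1 := rfl
      rw [this]
      have h1 : ((-1 : ℤ) + a).toNat = a - 1 := by omega
      rw [h1]
      exact Nat.choose_eq_zero_of_lt (by omega)
    have hset : {β ∈ Smp 0 e | toLex α ≤ toLex β} = Set.univ := by
      ext β
      simp only [Set.mem_setOf_eq, Set.mem_univ, iff_true]
      refine ⟨by simp [mem_smp], ?_⟩
      have : α = β := Subsingleton.elim _ _
      rw [this]
    rw [hs, hset, Set.ncard_univ]
    simp [Nat.card_eq_fintype_card]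
  | succ n ih =>
    intro e α hα
    have hα0 : α 0 ≤ e := by
      have : α 0 ≤ ∑ i, α i :=
        Finset.single_le_sum (fun j _ => Nat.zero_le (α j)) (Finset.mem_univ 0)
      omega
    set b := e - α 0 with hb
    have htail : ∑ i, Fin.tail α i ≤ b := by
      have := Fin.sum_univ_succ α
      simp only [Fin.tail] at *
      omega
    -- upset splitting
    have hU : {β ∈ Smp (n+1) e | toLex α ≤ toLex β}
        = {β ∈ Smp (n+1) e | α 0 < β 0}
          ∪ ((fun β' : Fin n → ℕ => (Fin.cons (α 0) β' : Fin (n+1) → ℕ)) '' {β' ∈ Smp n b | toLex (Fin.tail α) ≤ toLex β'}) := by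
      ext β
      constructor
      · rintro ⟨hmem, hle⟩
        rw [← Fin.cons_self_tail (q := α), ← Fin.cons_self_tail (q := β)] at hle
        rcases lex_le_cons.mp hle with hlt | ⟨heq, hle'⟩
        · exact Or.inl ⟨hmem, hlt⟩
        · refine Or.inr ⟨Fin.tail β, ⟨?_, hle'⟩, ?_⟩
          · have hs := sum_cons (β 0) (Fin.tail β)
            rw [Fin.cons_self_tail] at hs
            rw [mem_smp] at hmem ⊢
            omega
          · rw [heq]
            exact Fin.cons_self_tail β
      · rintro (⟨hmem, hlt⟩ | ⟨β', ⟨hmem', hle'⟩, rfl⟩)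
        · refine ⟨hmem, ?_⟩
          rw [← Fin.cons_self_tail (q := α), ← Fin.cons_self_tail (q := β)]
          exact lex_le_cons.mpr (Or.inl hlt)
        · refine ⟨?_, ?_⟩
          · rw [mem_smp, sum_cons]
            rw [mem_smp] at hmem'
            omega
          · rw [← Fin.cons_self_tail (q := α)]
            exact lex_le_cons.mpr (Or.inr ⟨rfl, by simpa using hle'⟩)
    have hdisj : Disjoint {β ∈ Smp (n+1) e | α 0 < β 0}
        ((fun β' : Fin n → ℕ => (Fin.cons (α 0) β' : Fin (n+1) → ℕ)) '' {β' ∈ Smp n b | toLex (Fin.tail α) ≤ toLex β'}) := by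
      rw [Set.disjoint_left]
      rintro β ⟨_, hlt⟩ ⟨β', _, rfl⟩
      simp at hlt
    have hfin1 : {β ∈ Smp (n+1) e | α 0 < β 0}.Finite :=
      (smp_finite _ _).subset (fun β hβ => hβ.1)
    have hfin2 : ((fun β' : Fin n → ℕ => (Fin.cons (α 0) β' : Fin (n+1) → ℕ)) '' {β' ∈ Smp n b | toLex (Fin.tail α) ≤ toLex β'}).Finite :=
      (((smp_finite n b).subset (fun β hβ => hβ.1)).image _)
    have A5 : ({β ∈ Smp (n+1) e | toLex α ≤ toLex β}).ncard
        = (n + b).choose (n+1) + ({β' ∈ Smp n b | toLex (Fin.tail α) ≤ toLex β'}).ncard := by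
      rw [hU, Set.ncard_union_eq hdisj hfin1 hfin2, ncard_gt,
        Set.ncard_image_of_injective _ (cons_inj (α 0))]
    -- choose-sum splitting
    have A1 : (∑ a ∈ Finset.Ioc 0 b, ((g (n+1) α e a + a).toNat).choose a)
        + (∑ a ∈ Finset.Ioc b e, ((g (n+1) α e a + a).toNat).choose a)
        = ∑ a ∈ Finset.Ioc 0 e, ((g (n+1) α e a + a).toNat).choose a :=
      Finset.sum_Ioc_consecutive _ (Nat.zero_le b) (by omega)
    have A2 : ∑ a ∈ Finset.Ioc 0 b, ((g (n+1) α e a + a).toNat).choose a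
        = ∑ a ∈ Finset.Ioc 0 b, ((g n (Fin.tail α) b a + a).toNat).choose a := by
      apply Finset.sum_congr rfl
      intro a ha
      rw [Finset.mem_Ioc] at ha
      rw [g, if_neg (by omega)]
    have A3 : ∑ a ∈ Finset.Ioc b e, ((g (n+1) α e a + a).toNat).choose a
        = ∑ a ∈ Finset.Ioc b e, (n + a).choose a := by
      apply Finset.sum_congr rfl
      intro a ha
      rw [Finset.mem_Ioc] at ha
      rw [g, if_pos ⟨ha.1, ha.2⟩]
      have hnn : ((n : ℤ) + a).toNat = n + a := by omega
      rw [hnn]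
    have A4 := ih b (Fin.tail α) htail
    have A6 := hockey_Ioc n b
    have A7 := hockey_Ioc n e
    have A8 : (∑ a ∈ Finset.Ioc 0 b, (n + a).choose a)
        + (∑ a ∈ Finset.Ioc b e, (n + a).choose a)
        = ∑ a ∈ Finset.Ioc 0 e, (n + a).choose a :=
      Finset.sum_Ioc_consecutive _ (Nat.zero_le b) (by omega)
    have A9 : (n + b + 1).choose (n+1) = (n+b).choose n + (n+b).choose (n+1) :=
      Nat.choose_succ_succ (n+b) n
    have A6' : (n + 1 + b) = (n + b + 1) := by ring
    rw [A6'] at A6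
    rw [A5, ← A1, A2, A3]
    have A7' : (n + 1 + e).choose (n+1) = (n+e+1).choose (n+1) := by rw [show n+1+e = n+e+1 by ring]
    omega

lemma Icc_one_eq_Ioc (X : ℕ) : Finset.Icc 1 X = Finset.Ioc 0 X := by
  ext a; simp [Finset.mem_Icc, Finset.mem_Ioc]; omega

lemma mono_chain {D : ℕ} {M : ℕ → ℤ} (h : ∀ a ∈ Finset.Ico 1 D, M a ≤ M (a+1)) :
    ∀ a c, 1 ≤ a → a ≤ c → c ≤ D → M a ≤ M c := by
  intro a c ha hac hcD
  induction c with
  | zero => omega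
  | succ c ih =>
    rcases Nat.lt_or_ge a (c+1) with hlt | hge
    · have h1 : M a ≤ M c := ih (by omega) (by omega)
      have h2 : M c ≤ M (c+1) := h c (Finset.mem_Ico.mpr ⟨by omega, by omega⟩)
      exact le_trans h1 h2
    · have : a = c + 1 := by omega
      rw [this]

lemma mac_bound {d : ℕ} {M : ℕ → ℤ}
    (hmono : ∀ a ∈ Finset.Ico 1 (d+1), M a ≤ M (a+1))
    (hge : ∀ a ∈ Finset.Icc 1 (d+1), -1 ≤ M a) :
    ∑ a ∈ Finset.Icc 1 (d+1), ((M a + a).toNat).choose a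
      < ((M (d+1) + (d+1)).toNat + 1).choose (d+1) := by
  rcases eq_or_lt_of_le (hge (d+1) (Finset.mem_Icc.mpr ⟨by omega, le_refl _⟩)) with htop | htop
  · -- M (d+1) = -1, all entries -1
    have hall : ∀ a ∈ Finset.Icc 1 (d+1), ((M a + a).toNat).choose a = 0 := by
      intro a ha
      rw [Finset.mem_Icc] at ha
      have h1 : M a ≤ M (d+1) := mono_chain hmono a (d+1) ha.1 ha.2 (le_refl _)
      have h2 : -1 ≤ M a := hge a (Finset.mem_Icc.mpr ha)
      have h3 : M a = -1 := by omega
      rw [h3]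
      exact Nat.choose_eq_zero_of_lt (by omega)
    rw [Finset.sum_eq_zero hall]
    have h4 : ((M (d+1) + (d+1)).toNat + 1).choose (d+1) = (d+1).choose (d+1) := by
      congr 1
      omega
    rw [h4, Nat.choose_self]
    omega
  · have hM : 0 ≤ M (d+1) := by omega
    set s := (M (d+1)).toNat with hs
    have hMs : M (d+1) = (s : ℤ) := by omega
    have hsum := Finset.sum_Icc_succ_top (f := fun a => ((M a + (a : ℤ)).toNat).choose a)
      (show 1 ≤ d + 1 by omega)
    have hbound : ∑ a ∈ Finset.Icc 1 d, ((M a + a).toNat).choose a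
        ≤ ∑ a ∈ Finset.Icc 1 d, (s + a).choose a := by
      apply Finset.sum_le_sum
      intro a ha
      rw [Finset.mem_Icc] at ha
      have h1 : M a ≤ M (d+1) := mono_chain hmono a (d+1) ha.1 (by omega) (le_refl _)
      exact Nat.choose_le_choose a (by omega)
    have hhk := hockey_Ioc s d
    rw [← Icc_one_eq_Ioc] at hhk
    have hp : (s + d + 1 + 1).choose (d+1) = (s+d+1).choose d + (s+d+1).choose (d+1) :=
      Nat.choose_succ_succ (s+d+1) d
    have hsym : (s+1+d).choose (s+1) = (s+d+1).choose d := by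
      rw [show s+1+d = s+d+1 by ring, ← Nat.choose_symm (show d ≤ s+d+1 by omega)]
      congr 1
      omega
    rw [hsum]
    push_cast
    have hb : (M (d+1) + ((d:ℤ)+1)).toNat = s + d + 1 := by omega
    rw [hb]
    omega

lemma mac_unique : ∀ (d : ℕ) (M M' : ℕ → ℤ),
    (∀ a ∈ Finset.Ico 1 d, M a ≤ M (a+1)) → (∀ a ∈ Finset.Icc 1 d, -1 ≤ M a) →
    (∀ a ∈ Finset.Ico 1 d, M' a ≤ M' (a+1)) → (∀ a ∈ Finset.Icc 1 d, -1 ≤ M' a) →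
    (∑ a ∈ Finset.Icc 1 d, ((M a + a).toNat).choose a
      = ∑ a ∈ Finset.Icc 1 d, ((M' a + a).toNat).choose a) →
    ∀ a ∈ Finset.Icc 1 d, M a = M' a := by
  intro d
  induction d with
  | zero =>
    intro M M' _ _ _ _ _ a ha
    rw [Finset.mem_Icc] at ha
    omega
  | succ d ih =>
    intro M M' hm1 hg1 hm2 hg2 hsum
    have hmem : d + 1 ∈ Finset.Icc 1 (d+1) := Finset.mem_Icc.mpr ⟨by omega, le_refl _⟩
    have hup1 := mac_bound hm1 hg1
    have hup2 := mac_bound hm2 hg2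
    have e1 := Finset.sum_Icc_succ_top (f := fun a => ((M a + (a : ℤ)).toNat).choose a)
      (show 1 ≤ d + 1 by omega)
    have e2 := Finset.sum_Icc_succ_top (f := fun a => ((M' a + (a : ℤ)).toNat).choose a)
      (show 1 ≤ d + 1 by omega)
    rw [e1] at hsum hup1
    rw [e2] at hsum hup2
    push_cast at hsum hup1 hup2
    set b1 := (M (d+1) + ((d:ℤ)+1)).toNat with hb1def
    set b2 := (M' (d+1) + ((d:ℤ)+1)).toNat with hb2def
    have hbb : b1 = b2 := by
      by_contra hne
      rcases Nat.lt_or_ge b1 b2 with hlt | hge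
      · have hcc := Nat.choose_le_choose (d+1) (show b1 + 1 ≤ b2 from hlt)
        omega
      · have hlt2 : b2 < b1 := by omega
        have hcc := Nat.choose_le_choose (d+1) (show b2 + 1 ≤ b1 from hlt2)
        omega
    have htopeq : M (d+1) = M' (d+1) := by
      have g1 := hg1 (d+1) hmem
      have g2 := hg2 (d+1) hmem
      omega
    have hsum' : ∑ a ∈ Finset.Icc 1 d, ((M a + a).toNat).choose a
        = ∑ a ∈ Finset.Icc 1 d, ((M' a + a).toNat).choose a := by
      rw [hbb] at hsum
      omega
    have hrec := ih M M'
      (fun a ha => hm1 a (by rw [Finset.mem_Ico] at *; omega))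
      (fun a ha => hg1 a (by rw [Finset.mem_Icc] at *; omega))
      (fun a ha => hm2 a (by rw [Finset.mem_Ico] at *; omega))
      (fun a ha => hg2 a (by rw [Finset.mem_Icc] at *; omega))
      hsum'
    intro a ha
    rw [Finset.mem_Icc] at ha
    rcases Nat.lt_or_ge a (d+1) with hlt | hge
    · exact hrec a (Finset.mem_Icc.mpr ⟨ha.1, by omega⟩)
    · have haa : a = d + 1 := by omega
      rw [haa, htopeq]

lemma hcube_eq {q n e : ℕ} (h : e < q) : HcubeLe q n e = Smp n e := by
  ext β
  constructor
  · rintro ⟨_, hs⟩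
    exact hs
  · intro hs
    refine ⟨fun j => ?_, hs⟩
    have : β j ≤ ∑ i, β i :=
      Finset.single_le_sum (fun i _ => Nat.zero_le (β i)) (Finset.mem_univ j)
    rw [mem_smp] at hs
    omega

lemma pz_step (q n : ℕ) : pz q (n : ℤ) = q ^ n + pz q ((n:ℤ) - 1) := by
  cases n with
  | zero => simp [pz]
  | succ n =>
    have h2 : (((n+1 : ℕ) : ℤ) - 1) = (n : ℤ) := by push_cast; ring
    rw [pz, pz, h2, if_pos (by positivity), if_pos (by positivity)]
    rw [show ((n+1:ℕ):ℤ).toNat = n + 1 by omega, show ((n:ℕ):ℤ).toNat = n by omega]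
    rw [Finset.sum_range_succ]
    ring

lemma pz_neg_one (q : ℕ) : pz q (-1) = 0 := by simp [pz]

lemma decomp (m d : ℕ) (hd : 1 ≤ d) : ∀ i, i ≤ m →
    (m+d).choose d = (∑ a ∈ Finset.Icc 1 i, (m+d-a).choose (d-1)) + (m+d-i).choose d := by
  intro i
  induction i with
  | zero => simp
  | succ i ih =>
    intro hi
    rw [Finset.sum_Icc_succ_top (show 1 ≤ i+1 by omega)]
    have hpas : (m+d-i).choose d = (m+d-(i+1)).choose (d-1) + (m+d-(i+1)).choose d := by
      have hstep : (m+d-i).choose d = ((m+d-(i+1))+1).choose ((d-1)+1) := by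
        congr 1 <;> omega
      rw [hstep, Nat.choose_succ_succ]
      simp only [Nat.succ_eq_add_one]
      congr 2
      omega
    rw [ih (by omega), hpas]
    ring

end St15

open St15

/-- with `i, j` from the standard decomposition of `r` and
`(m_d, …, m_1)` the Macaulay `d`-tuple corresponding to `C(m+d, d) - r`,
`H_j(d-1, m-i) + p_{m-i-1} = p_{m_d} + Σ_{a=1}^{d-1} ⌊q^{m_a}⌋`. -/
theorem statement_15 (q m d r i j : ℕ) (hq : IsPrimePow q) (hm : 0 < m)
    (hd1 : 1 ≤ d) (hdq : d ≤ q) (hr1 : 1 ≤ r) (hr2 : r ≤ (m+d).choose d)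
    (hij : (r < (m+d).choose d ∧
            r = (∑ a ∈ Finset.Icc 1 i, (m+d-a).choose (d-1)) + j ∧
            i ≤ m ∧ j < (m+d-i-1).choose (d-1)) ∨
           (r = (m+d).choose d ∧ i = m ∧ j = 1))
    (M : ℕ → ℤ)
    (hmono : ∀ a ∈ Finset.Ico 1 d, M a ≤ M (a+1))
    (hge : ∀ a ∈ Finset.Icc 1 d, -1 ≤ M a)
    (hrep : ((m+d).choose d - r : ℕ) = ∑ a ∈ Finset.Icc 1 d, ((M a + a).toNat).choose a)
    (H : ℕ) (hH : IsHr q (d-1) (m-i) j H) :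
    H + pz q ((m : ℤ) - i - 1) = pz q (M d) + ∑ a ∈ Finset.Icc 1 (d-1), qfl q (M a) := by
  rcases hij with ⟨hlt, hreq, hi, hj⟩ | ⟨hre, hieq, hjeq⟩
  · -- main case
    have hC := decomp m d hd1 i hi
    rcases Nat.eq_zero_or_pos j with hj0 | hj1
    · -- j = 0 : M is (m-i, -1, ..., -1)
      subst hj0
      have hH' : H = q ^ (m - i) := by
        rcases hH with ⟨_, hv⟩ | ⟨hpos, _⟩
        · exact hv
        · omega
      set Msp : ℕ → ℤ := fun a => if a = d then ((m - i : ℕ) : ℤ) else -1 with hMsp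
      have hMspsum : ∑ a ∈ Finset.Icc 1 d, ((Msp a + a).toNat).choose a
          = (m + d - i).choose d := by
        rw [Finset.sum_eq_single_of_mem d (Finset.mem_Icc.mpr ⟨hd1, le_refl d⟩)]
        · simp only [hMsp, if_pos rfl]
          rw [show (((m - i : ℕ) : ℤ) + (d : ℤ)).toNat = m + d - i by omega]
        · intro a ha hne
          rw [Finset.mem_Icc] at ha
          simp only [hMsp, if_neg hne]
          rw [show ((-1 : ℤ) + a).toNat = a - 1 by omega]
          exact Nat.choose_eq_zero_of_lt (by omega)
      have hN : ((m+d).choose d - r : ℕ) = (m + d - i).choose d := by omega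
      have hsums : ∑ a ∈ Finset.Icc 1 d, ((M a + a).toNat).choose a
          = ∑ a ∈ Finset.Icc 1 d, ((Msp a + a).toNat).choose a := by
        rw [hMspsum]; omega
      have hMeq := mac_unique d M Msp hmono hge
        (by
          intro a ha
          rw [Finset.mem_Ico] at ha
          simp only [hMsp, if_neg (show a ≠ d by omega)]
          split_ifs with h
          · omega
          · exact le_refl _)
        (by
          intro a ha
          simp only [hMsp]
          split_ifs with h
          · omega
          · exact le_refl _)
        hsums
      have hMd : M d = ((m - i : ℕ) : ℤ) := by
        have := hMeq d (Finset.mem_Icc.mpr ⟨hd1, le_refl d⟩)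
        simpa [hMsp] using this
      have hqsum : ∑ a ∈ Finset.Icc 1 (d-1), qfl q (M a) = 0 := by
        apply Finset.sum_eq_zero
        intro a ha
        rw [Finset.mem_Icc] at ha
        have := hMeq a (Finset.mem_Icc.mpr ⟨ha.1, by omega⟩)
        simp only [hMsp, if_neg (show a ≠ d by omega)] at this
        rw [this]
        simp [qfl]
      rw [hMd, hqsum, hH', pz_step q (m - i)]
      have hcast : ((m - i : ℕ) : ℤ) - 1 = (m : ℤ) - i - 1 := by omega
      rw [hcast]
      ring
    · -- j ≥ 1 : the interesting case
      have him : i < m := by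
        rcases Nat.lt_or_ge i m with h | h
        · exact h
        · exfalso
          have hiem : i = m := by omega
          rw [hiem, show m + d - m - 1 = d - 1 by omega, Nat.choose_self] at hj
          omega
      obtain ⟨e, rfl⟩ : ∃ e, d = e + 1 := ⟨d - 1, by omega⟩
      simp only [Nat.add_sub_cancel] at hH hj hreq hC ⊢
      rcases hH with ⟨hj0', _⟩ | ⟨_, α, hmem, hcard, hHv⟩
      · omega
      have he : e < q := by omega
      rw [hcube_eq he] at hmem hcard
      have hαs : ∑ k, α k ≤ e := hmem
      have hKEY := key (m - i) e α hαs
      rw [hcard] at hKEY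
      -- the choose bounds / arithmetic
      rw [show m + (e+1) - i - 1 = m - i + e by omega] at hj
      have hsymm : (m - i + e).choose (m - i) = (m - i + e).choose e := by
        rw [← Nat.choose_symm (show m - i ≤ m - i + e by omega)]
        congr 1
        omega
      set Msp : ℕ → ℤ := fun a => if a = e + 1 then ((m - i : ℕ) : ℤ) - 1
        else g (m - i) α e a with hMsp
      have hMspsum : ∑ a ∈ Finset.Icc 1 (e+1), ((Msp a + a).toNat).choose a
          = (m - i + e).choose (e+1)
            + ∑ a ∈ Finset.Ioc 0 e, ((g (m-i) α e a + a).toNat).choose a := by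
        rw [Finset.sum_Icc_succ_top (show 1 ≤ e+1 by omega), Icc_one_eq_Ioc]
        have h1 : ∑ a ∈ Finset.Ioc 0 e, ((Msp a + a).toNat).choose a
            = ∑ a ∈ Finset.Ioc 0 e, ((g (m-i) α e a + a).toNat).choose a := by
          apply Finset.sum_congr rfl
          intro a ha
          rw [Finset.mem_Ioc] at ha
          simp only [hMsp, if_neg (show a ≠ e+1 by omega)]
        have h2 : ((Msp (e+1) + ((e+1:ℕ):ℤ)).toNat).choose (e+1)
            = (m - i + e).choose (e+1) := by
          simp only [hMsp, if_pos rfl]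
          congr 1
          omega
        rw [h1, h2]
        ring
      have hPas : (m - i + e + 1).choose (e+1)
          = (m-i+e).choose e + (m-i+e).choose (e+1) := Nat.choose_succ_succ (m-i+e) e
      have hCi : (m + (e+1) - i).choose (e+1) = (m - i + e + 1).choose (e+1) := by
        congr 1
        omega
      have hsums : ∑ a ∈ Finset.Icc 1 (e+1), ((M a + a).toNat).choose a
          = ∑ a ∈ Finset.Icc 1 (e+1), ((Msp a + a).toNat).choose a := by
        rw [hMspsum]
        omega
      have hMeq := mac_unique (e+1) M Msp hmono hge
        (by
          intro a ha
          rw [Finset.mem_Ico] at ha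
          simp only [hMsp, if_neg (show a ≠ e+1 by omega)]
          split_ifs with hae
          · exact g_le (m-i) α e a
          · exact g_mono (m-i) α e a (a+1) (by omega) (by omega))
        (by
          intro a ha
          simp only [hMsp]
          split_ifs with hae
          · omega
          · exact g_ge _ _ _ _)
        hsums
      have hMd : M (e+1) = ((m - i:ℕ):ℤ) - 1 := by
        have := hMeq (e+1) (Finset.mem_Icc.mpr ⟨by omega, le_refl _⟩)
        simpa [hMsp] using this
      have hqsum : ∑ a ∈ Finset.Icc 1 e, qfl q (M a)
          = ∑ k : Fin (m-i), α k * q ^ (m - i - 1 - (k:ℕ)) := by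
        rw [Icc_one_eq_Ioc, ← g_qfl_sum q (m-i) e α hαs]
        apply Finset.sum_congr rfl
        intro a ha
        rw [Finset.mem_Ioc] at ha
        rw [hMeq a (Finset.mem_Icc.mpr ⟨by omega, by omega⟩)]
        simp only [hMsp, if_neg (show a ≠ e+1 by omega)]
      rw [hMd, hqsum, ← hHv]
      have hcast : ((m - i:ℕ):ℤ) - 1 = (m:ℤ) - i - 1 := by omega
      rw [hcast]
      ring
  · -- r = choose: everything is -1
    rw [hre, Nat.sub_self] at hrep
    have hzero : ∀ a ∈ Finset.Icc 1 d, M a = -1 := by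
      intro a ha
      have hterm : ((M a + a).toNat).choose a = 0 :=
        (Finset.sum_eq_zero_iff.mp hrep.symm) a ha
      rw [Finset.mem_Icc] at ha
      rw [Nat.choose_eq_zero_iff] at hterm
      have := hge a (Finset.mem_Icc.mpr ha)
      omega
    have hMd : M d = -1 := hzero d (Finset.mem_Icc.mpr ⟨hd1, le_refl d⟩)
    have hqsum : ∑ a ∈ Finset.Icc 1 (d-1), qfl q (M a) = 0 := by
      apply Finset.sum_eq_zero
      intro a ha
      rw [Finset.mem_Icc] at ha
      rw [hzero a (Finset.mem_Icc.mpr ⟨ha.1, by omega⟩)]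
      simp [qfl]
    have hH0 : H = 0 := by
      rcases hH with ⟨h0, _⟩ | ⟨_, α, _, _, hHv⟩
      · omega
      · have hie : IsEmpty (Fin (m - i)) := by
          rw [hieq, Nat.sub_self]
          infer_instance
        rw [hHv, @Finset.univ_eq_empty _ _ hie, Finset.sum_empty]
    rw [hH0, hMd, hqsum, show (m:ℤ) - i - 1 = -1 by rw [hieq]; ring, pz_neg_one]
end

section
/- Let q be a prime power, m a positive integer, and d an integer with 1 ≤ d ≤ q. Then the sequence e_r(d, m) is strictly decreasing in r: e_1(d, m) > e_2(d, m) > ··· > e_{C(m+d,d)}(d, m) = 0. -/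
open scoped Classical

set_option maxHeartbeats 2000000
set_option synthInstance.maxHeartbeats 1000000

/-! ### Auxiliary material for the proof of Statement 19 -/

section Aux19

open MvPolynomial

variable {m d q : ℕ} {Fq : Type} [Field Fq] [Fintype Fq]

private lemma aux_eval_smul {k n : ℕ} {F : MvPolynomial (Fin k) Fq} (hF : F.IsHomogeneous n)
    (c : Fq) (x : Fin k → Fq) :
    MvPolynomial.eval (c • x) F = c ^ n * MvPolynomial.eval x F := by
  rw [eval_eq, eval_eq, Finset.mul_sum]
  refine Finset.sum_congr rfl fun s hs => ?_
  have hs' : s.degree = n := by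
    rw [Finsupp.degree_eq_weight_one]
    exact hF (mem_support_iff.mp hs)
  have hsum : ∑ i ∈ s.support, s i = n := by
    simpa [Finsupp.degree_apply] using hs'
  have hprod : ∏ i ∈ s.support, (c • x) i ^ s i
      = c ^ n * ∏ i ∈ s.support, x i ^ s i := by
    simp only [Pi.smul_apply, smul_eq_mul, mul_pow]
    rw [Finset.prod_mul_distrib, Finset.prod_pow_eq_pow_sum, hsum]
  rw [hprod]; ring

private lemma aux_vanish_all (hcard : Fintype.card Fq = q) (hd1 : 1 ≤ d) (hdq : d ≤ q)
    {F : MvPolynomial (Fin (m+1)) Fq} (hF : F.IsHomogeneous d)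
    (h : ∀ p : Projectivization Fq (Fin (m+1) → Fq), MvPolynomial.eval p.rep F = 0) :
    F = 0 := by
  refine hF.eq_zero_of_forall_eval_eq_zero_of_le_card (fun x => ?_) ?_
  · by_cases hx : x = 0
    · subst hx
      have h0 := aux_eval_smul hF (0 : Fq) 0
      simpa [zero_pow (by omega : d ≠ 0)] using h0
    · set p := Projectivization.mk Fq x hx with hp
      obtain ⟨a, ha⟩ := (Projectivization.mk_eq_mk_iff Fq _ _
        (Projectivization.rep_nonzero p) hx).mp (Projectivization.mk_rep p)
      have hx' : x = ((a⁻¹ : Fqˣ) : Fq) • p.rep := by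
        rw [← ha, ← Units.smul_def, smul_smul]; simp
      rw [hx', aux_eval_smul hF, h p, mul_zero]
  · rw [Cardinal.mk_fintype, hcard]
    exact_mod_cast hdq

/-- The degree-`d` exponent vectors are equinumerous with `Sym (Fin (m+1)) d`. -/
private noncomputable def auxSymEquiv (m d : ℕ) :
    Sym (Fin (m+1)) d ≃ {s : Fin (m+1) →₀ ℕ // s.degree = d} where
  toFun μ := ⟨Multiset.toFinsupp μ.1, by
    have h := Multiset.toFinsupp_sum_eq (μ.1)
    simpa [Finsupp.degree_apply, Finsupp.sum, μ.2] using h⟩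
  invFun s := ⟨Finsupp.toMultiset s.1, by
    rw [Finsupp.card_toMultiset]
    have h2 : s.1.degree = d := s.2
    simpa [Finsupp.degree_apply, Finsupp.sum] using h2⟩
  left_inv μ := Subtype.ext (by simp)
  right_inv s := Subtype.ext (by simp)

private lemma aux_finrank_homog (m d : ℕ) (Fq : Type) [Field Fq] :
    Module.Finite Fq (homogeneousSubmodule (Fin (m+1)) Fq d) ∧
    Module.finrank Fq (homogeneousSubmodule (Fin (m+1)) Fq d) = (m+d).choose d := by
  have e0 : {s : Fin (m+1) →₀ ℕ // s.degree = d} ≃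
      ↥{s : Fin (m+1) →₀ ℕ | s.degree = d} :=
    Equiv.subtypeEquivRight fun x => Iff.rfl
  haveI : Finite ↥{s : Fin (m+1) →₀ ℕ | s.degree = d} :=
    Finite.of_equiv _ ((auxSymEquiv m d).trans e0)
  haveI : Fintype ↥{s : Fin (m+1) →₀ ℕ | s.degree = d} := Fintype.ofFinite _
  let e : (homogeneousSubmodule (Fin (m+1)) Fq d) ≃ₗ[Fq]
      (↥{s : Fin (m+1) →₀ ℕ | s.degree = d} → Fq) :=
    (LinearEquiv.ofEq _ _ (homogeneousSubmodule_eq_finsupp_supported (Fin (m+1)) Fq d)).trans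
      ((AddMonoidAlgebra.supportedEquivFinsupp _).trans (Finsupp.linearEquivFunOnFinite Fq Fq _))
  constructor
  · exact Module.Finite.equiv e.symm
  · rw [e.finrank_eq, Module.finrank_fintype_fun_eq_card,
      Fintype.card_congr (((auxSymEquiv m d).trans e0)).symm,
      Sym.card_sym_eq_choose, Fintype.card_fin]
    congr 1
    omega

private lemma aux_card_deg (m d : ℕ) [Fintype {s : Fin (m+1) →₀ ℕ // s.degree = d}] :
    Fintype.card {s : Fin (m+1) →₀ ℕ // s.degree = d} = (m+d).choose d := by
  rw [Fintype.card_congr (auxSymEquiv m d).symm, Sym.card_sym_eq_choose, Fintype.card_fin]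
  congr 1
  omega

/-- The common zero set of a family of polynomials, in projective space. -/
private def zset {m r : ℕ} {Fq : Type} [Field Fq]
    (F : Fin r → MvPolynomial (Fin (m+1)) Fq) :
    Set (Projectivization Fq (Fin (m+1) → Fq)) :=
  {p | ∀ i, MvPolynomial.eval p.rep (F i) = 0}

/-- The defining set for `er`. -/
private def erSet (Fq : Type) [Field Fq] [Fintype Fq] (d m r : ℕ) : Set ℕ :=
  {n | ∃ F : Fin r → MvPolynomial (Fin (m+1)) Fq,
    LinearIndependent Fq F ∧ (∀ i, (F i).IsHomogeneous d) ∧ n = projPoints F}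

private lemma er_eq_sSup (d m r : ℕ) : er Fq d m r = sSup (erSet Fq d m r) := rfl

private lemma aux_bdd (d m r : ℕ) : BddAbove (erSet Fq d m r) := by
  haveI : Finite (Projectivization Fq (Fin (m+1) → Fq)) := Quotient.finite _
  refine ⟨Nat.card (Projectivization Fq (Fin (m+1) → Fq)), ?_⟩
  rintro n ⟨F, -, -, rfl⟩
  have h := Set.ncard_le_ncard (Set.subset_univ (zset F)) Set.finite_univ
  rw [Set.ncard_univ] at h
  exact h

/-- Evaluation at a point as a linear functional. -/
private noncomputable def evalLM (Fq : Type) [Field Fq] {m : ℕ} (y : Fin (m+1) → Fq) :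
    MvPolynomial (Fin (m+1)) Fq →ₗ[Fq] Fq where
  toFun := MvPolynomial.eval y
  map_add' f g := by simp
  map_smul' c f := by simp [MvPolynomial.smul_eq_C_mul]

private lemma aux_nonempty {r : ℕ} (hr : r ≤ (m+d).choose d) :
    (erSet Fq d m r).Nonempty := by
  haveI : Finite {s : Fin (m+1) →₀ ℕ // s.degree = d} :=
    Finite.of_equiv _ (auxSymEquiv m d)
  haveI : Fintype {s : Fin (m+1) →₀ ℕ // s.degree = d} := Fintype.ofFinite _
  have hc : Fintype.card {s : Fin (m+1) →₀ ℕ // s.degree = d} = (m+d).choose d :=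
    aux_card_deg m d
  let e := Fintype.equivFinOfCardEq hc
  let g : Fin r → {s : Fin (m+1) →₀ ℕ // s.degree = d} :=
    fun i => e.symm (Fin.castLE hr i)
  have hg : Function.Injective g :=
    e.symm.injective.comp (Fin.castLE_injective hr)
  refine ⟨projPoints (fun i => monomial (g i).1 (1:Fq)),
    fun i => monomial (g i).1 1, ?_, ?_, rfl⟩
  · have hli := (basisMonomials (Fin (m+1)) Fq).linearIndependent
    have h2 := hli.comp (fun i => (g i).1) (Subtype.val_injective.comp hg)
    have hcoe : ∀ s : Fin (m+1) →₀ ℕ,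
        basisMonomials (Fin (m+1)) Fq s = monomial s (1:Fq) := by
      intro s
      rw [coe_basisMonomials]
    have h3 : (fun i => monomial (g i).1 (1:Fq)) = (basisMonomials (Fin (m+1)) Fq) ∘ (fun i => (g i).1) := by
      funext i; simp [hcoe]
    rw [h3]; exact h2
  · intro i
    exact isHomogeneous_monomial _ (g i).2

private lemma aux_step (hcard : Fintype.card Fq = q) (hd1 : 1 ≤ d) (hdq : d ≤ q)
    {r : ℕ} (hr : r + 1 ≤ (m+d).choose d) :
    er Fq d m (r+1) < er Fq d m r := by
  haveI : Finite (Projectivization Fq (Fin (m+1) → Fq)) := Quotient.finite _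
  have hmem := Nat.sSup_mem (aux_nonempty (Fq := Fq) hr) (aux_bdd d m (r+1))
  rw [← er_eq_sSup] at hmem
  obtain ⟨F, hli, hhom, hpp⟩ := hmem
  -- a projective point where some `F i` does not vanish
  obtain ⟨p, i0, hi0⟩ :
      ∃ (p : Projectivization Fq (Fin (m+1) → Fq)) (i0 : Fin (r+1)),
        MvPolynomial.eval p.rep (F i0) ≠ 0 := by
    by_contra hcon
    push_neg at hcon
    exact hli.ne_zero 0 (aux_vanish_all hcard hd1 hdq (hhom 0) (fun p => hcon p 0))
  let φ := evalLM Fq p.rep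
  set V : Submodule Fq (MvPolynomial (Fin (m+1)) Fq) :=
    Submodule.span Fq (Set.range F) with hV
  have hVle : V ≤ homogeneousSubmodule (Fin (m+1)) Fq d := by
    rw [hV, Submodule.span_le]
    rintro x ⟨i, rfl⟩
    exact hhom i
  obtain ⟨hfin, -⟩ := aux_finrank_homog m d Fq
  haveI : Module.Finite Fq (homogeneousSubmodule (Fin (m+1)) Fq d) := hfin
  haveI : FiniteDimensional Fq V := Submodule.finiteDimensional_of_le hVle
  have hrankV : Module.finrank Fq V = r + 1 := by
    rw [hV, finrank_span_eq_card hli, Fintype.card_fin]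
  let ψ := φ.domRestrict V
  have hFi0V : F i0 ∈ V := Submodule.subset_span ⟨i0, rfl⟩
  have hψ : ψ ≠ 0 := by
    intro h0
    exact hi0 (by simpa [ψ, φ, evalLM] using DFunLike.congr_fun h0 ⟨F i0, hFi0V⟩)
  have hkerrank : Module.finrank Fq (LinearMap.ker ψ) = r := by
    have h1 := LinearMap.finrank_range_add_finrank_ker ψ
    have h2 : Module.finrank Fq (LinearMap.range ψ) = 1 := by
      have hle : Module.finrank Fq (LinearMap.range ψ) ≤ 1 := by
        have h3 := Submodule.finrank_le (LinearMap.range ψ)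
        simpa [Module.finrank_self] using h3
      have hne : LinearMap.range ψ ≠ ⊥ := by
        exact fun h => hψ (LinearMap.range_eq_bot.mp h)
      have h0 : Module.finrank Fq (LinearMap.range ψ) ≠ 0 :=
        fun h => hne (Submodule.finrank_eq_zero.mp h)
      omega
    rw [hrankV] at h1
    omega
  let W : Submodule Fq (MvPolynomial (Fin (m+1)) Fq) := V ⊓ LinearMap.ker φ
  have hWle : W ≤ V := inf_le_left
  haveI : FiniteDimensional Fq W :=
    Submodule.finiteDimensional_of_le (le_trans hWle hVle)
  have hWrank : Module.finrank Fq W = r := by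
    have hmap : Submodule.map V.subtype (LinearMap.ker ψ) = W := by
      rw [LinearMap.ker_domRestrict, Submodule.map_comap_subtype]
    have hfr2 := Submodule.finrank_map_subtype_eq V (LinearMap.ker ψ)
    rw [hmap] at hfr2
    rw [hfr2]
    exact hkerrank
  let b := (Module.finBasis Fq W).reindex (finCongr hWrank)
  let G : Fin r → MvPolynomial (Fin (m+1)) Fq := ⇑W.subtype ∘ ⇑b
  have hGli : LinearIndependent Fq G :=
    b.linearIndependent.map' W.subtype (Submodule.ker_subtype W)
  have hGmemW : ∀ i, (G i) ∈ W := fun i => (b i).2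
  have hGmemV : ∀ i, (G i) ∈ V := fun i => (hGmemW i).1
  have hGhom : ∀ i, (G i).IsHomogeneous d := fun i => hVle (hGmemV i)
  have hsub : insert p (zset F) ⊆ zset G := by
    intro z hz
    rcases Set.mem_insert_iff.mp hz with rfl | hzZ
    · intro i
      have hk : φ (G i) = 0 := LinearMap.mem_ker.mp (hGmemW i).2
      simpa [φ, evalLM] using hk
    · intro i
      have hspan : V ≤ LinearMap.ker (evalLM Fq z.rep) := by
        rw [hV, Submodule.span_le]
        rintro x ⟨k, rfl⟩
        exact LinearMap.mem_ker.mpr (hzZ k)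
      have := hspan (hGmemV i)
      simpa [evalLM] using LinearMap.mem_ker.mp this
  have hpZ : p ∉ zset F := fun hp => hi0 (hp i0)
  have h1 : (insert p (zset F)).ncard = (zset F).ncard + 1 :=
    Set.ncard_insert_of_notMem hpZ (Set.toFinite _)
  have h2 := Set.ncard_le_ncard hsub (Set.toFinite _)
  have hGmem : projPoints G ∈ erSet Fq d m r := ⟨G, hGli, hGhom, rfl⟩
  have hle : projPoints G ≤ er Fq d m r := by
    rw [er_eq_sSup]
    exact le_csSup (aux_bdd d m r) hGmem
  have heq : er Fq d m (r+1) = (zset F).ncard := hpp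
  have heqG : projPoints G = (zset G).ncard := rfl
  omega

private lemma aux_top (hd1 : 1 ≤ d) : er Fq d m ((m+d).choose d) = 0 := by
  haveI : Finite (Projectivization Fq (Fin (m+1) → Fq)) := Quotient.finite _
  have hmem := Nat.sSup_mem (aux_nonempty (Fq := Fq) (le_refl ((m+d).choose d)))
    (aux_bdd d m ((m+d).choose d))
  rw [← er_eq_sSup] at hmem
  obtain ⟨F, hli, hhom, hpp⟩ := hmem
  rw [hpp]
  suffices h : zset F = ∅ by
    have : projPoints F = (zset F).ncard := rfl
    rw [this, h, Set.ncard_empty]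
  rw [Set.eq_empty_iff_forall_notMem]
  intro p hp
  let F' : Fin ((m+d).choose d) → homogeneousSubmodule (Fin (m+1)) Fq d :=
    fun i => ⟨F i, hhom i⟩
  have hli' : LinearIndependent Fq F' :=
    LinearIndependent.of_comp (homogeneousSubmodule (Fin (m+1)) Fq d).subtype hli
  haveI : Nonempty (Fin ((m+d).choose d)) :=
    ⟨⟨0, Nat.choose_pos (by omega)⟩⟩
  obtain ⟨hfin, hfr⟩ := aux_finrank_homog m d Fq
  haveI : Module.Finite Fq (homogeneousSubmodule (Fin (m+1)) Fq d) := hfin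
  have hspan := hli'.span_eq_top_of_card_eq_finrank
    (by rw [Fintype.card_fin, hfr])
  let ψ := (evalLM Fq p.rep).domRestrict (homogeneousSubmodule (Fin (m+1)) Fq d)
  have hker : ⊤ ≤ LinearMap.ker ψ := by
    rw [← hspan, Submodule.span_le]
    rintro x ⟨i, rfl⟩
    exact LinearMap.mem_ker.mpr (by simpa [ψ, evalLM, F'] using hp i)
  have hXmem : ∀ jj : Fin (m+1),
      (X jj ^ d : MvPolynomial (Fin (m+1)) Fq) ∈
        homogeneousSubmodule (Fin (m+1)) Fq d := by
    intro jj
    rw [mem_homogeneousSubmodule]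
    simpa using (isHomogeneous_X Fq jj).pow d
  have hzero : ∀ jj : Fin (m+1), p.rep jj = 0 := by
    intro jj
    have hmem' := hker (Submodule.mem_top
      (x := (⟨X jj ^ d, hXmem jj⟩ : homogeneousSubmodule (Fin (m+1)) Fq d)))
    have h2 : (p.rep jj) ^ d = 0 := by
      simpa [ψ, evalLM] using LinearMap.mem_ker.mp hmem'
    exact pow_eq_zero_iff (by omega : d ≠ 0) |>.mp h2
  exact Projectivization.rep_nonzero p (funext hzero)

end Aux19

/-- for `1 ≤ d ≤ q`, the sequence `e_r(d, m)` is strictly decreasing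
in `r`, and `e_{C(m+d,d)}(d, m) = 0`. -/
theorem statement_19 (q m d : ℕ) (hq : IsPrimePow q) (hm : 0 < m)
    (Fq : Type) [Field Fq] [Fintype Fq] (hcard : Fintype.card Fq = q)
    (hd1 : 1 ≤ d) (hdq : d ≤ q) :
    (∀ r : ℕ, 1 ≤ r → r < (m+d).choose d → er Fq d m (r+1) < er Fq d m r) ∧
    er Fq d m ((m+d).choose d) = 0 := by
  constructor
  · intro r hr1 hrlt
    exact aux_step hcard hd1 hdq (by omega)
  · exact aux_top hd1
end
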